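/- Cutting a nonempty endpoint edge set strictly increases the weight of an X-φ-forest: if F is an X-φ-forest and E is a nonempty endpoint edge set of F, then ω(F ÷ E) > ω(F), where ω(F) = 2(|F|−1) − q(F). Consequently, ω(T1,T2) = 0 if and only if T1 = T2. -/

import Mathlib

/-!
Common combinatorial framework for unrooted phylogenetic trees,
SPR / TBR / replug operations, agreement forests, endpoint agreement
forests and socket agreement forests, following
Whidden & Matsen, "Calculating the Unrooted Subtree Prune-and-Regraft
Distance".
-/

noncomputable section
open scoped Classical

namespace USPR

/-- A finite graph on a subset of `ℕ` whose vertices are partially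
labeled by elements of `L` (`none` = unlabeled internal node). -/
structure PGraph (L : Type) where
  verts : Finset ℕ
  edges : Finset (Sym2 ℕ)
  label : ℕ → Option L

variable {L : Type}

namespace PGraph

def adj (G : PGraph L) (u v : ℕ) : Prop := s(u, v) ∈ G.edges

/-- Reachability in `G`. -/
def Reach (G : PGraph L) : ℕ → ℕ → Prop := Relation.ReflTransGen G.adj

/-- Reachability in `G` avoiding the edges in `E`. -/
def ReachAvoiding (G : PGraph L) (E : Finset (Sym2 ℕ)) : ℕ → ℕ → Prop :=
  Relation.ReflTransGen (fun x y => s(x, y) ∈ G.edges \ E)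

def degree (G : PGraph L) (v : ℕ) : ℕ := (G.edges.filter (fun e => v ∈ e)).card

/-- Well-formedness: no loops, edges join vertices, labels live on vertices. -/
def WF (G : PGraph L) : Prop :=
  (∀ e ∈ G.edges, ¬e.IsDiag ∧ ∀ v ∈ e, v ∈ G.verts) ∧
  ∀ v : ℕ, (G.label v).isSome → v ∈ G.verts

def Connected (G : PGraph L) : Prop := ∀ u ∈ G.verts, ∀ v ∈ G.verts, G.Reach u v

/-- Every edge is a bridge: the graph has no cycles. -/
def Acyclic (G : PGraph L) : Prop :=
  ∀ u v : ℕ, s(u, v) ∈ G.edges → ¬G.ReachAvoiding {s(u, v)} u v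

def IsTreeGraph (G : PGraph L) : Prop :=
  G.WF ∧ G.verts.Nonempty ∧ G.Connected ∧ G.Acyclic

/-- Number of connected components of a forest (vertices minus edges). -/
def numComponents (G : PGraph L) : ℕ := G.verts.card - G.edges.card

/-- `f` is a label-preserving isomorphism from `G` to `H`. -/
def IsomMap (G H : PGraph L) (f : ℕ → ℕ) : Prop :=
  Set.BijOn f ↑G.verts ↑H.verts ∧
  (∀ u ∈ G.verts, ∀ v ∈ G.verts, (s(u, v) ∈ G.edges ↔ s(f u, f v) ∈ H.edges)) ∧
  ∀ v ∈ G.verts, H.label (f v) = G.label v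

/-- Label-preserving isomorphism of partially labeled graphs. -/
def Isom (G H : PGraph L) : Prop := ∃ f, IsomMap G H f

end PGraph

/-- An unrooted binary phylogenetic tree whose leaves are bijectively
labeled by the elements of `s ⊆ L`. -/
def IsXTreeOn (s : Set L) (T : PGraph L) : Prop :=
  T.IsTreeGraph ∧
  (∀ v ∈ T.verts, T.degree v = 1 ∨ T.degree v = 3) ∧
  (∀ v ∈ T.verts, (T.label v).isSome ↔ T.degree v = 1) ∧
  (∀ v ∈ T.verts, ∀ x : L, T.label v = some x → x ∈ s) ∧
  ∀ x ∈ s, ∃! v, v ∈ T.verts ∧ T.label v = some x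

/-- An unrooted binary phylogenetic `X`-tree (leaves bijectively labeled
by all of `X`). -/
def IsXTree (T : PGraph L) : Prop := IsXTreeOn Set.univ T

/-! ### Prune-and-reattach moves -/

/-- The data of a prune-and-reattach move: the edge `(u,v)` is cut
(`v` being the endpoint that moves), `a` and `b` are the other two
neighbours of `v` (which get merged when `v` is suppressed), the
reattachment subdivides edge `(p,q)` with the fresh node `w`, and the
new edge is `(u,w)`. -/
structure Move where
  u : ℕ
  v : ℕ
  a : ℕ
  b : ℕ
  p : ℕ
  q : ℕ
  w : ℕ
deriving DecidableEq, Inhabited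

/-- The raw combinatorial effect of a prune-and-reattach (replug) move. -/
def ApplyMove (T : PGraph L) (m : Move) (T' : PGraph L) : Prop :=
  s(m.u, m.v) ∈ T.edges ∧
  m.u ≠ m.v ∧ m.a ≠ m.b ∧ m.a ≠ m.u ∧ m.b ≠ m.u ∧ m.a ≠ m.v ∧ m.b ≠ m.v ∧
  T.edges.filter (fun e => m.v ∈ e) =
    ({s(m.u, m.v), s(m.v, m.a), s(m.v, m.b)} : Finset (Sym2 ℕ)) ∧
  s(m.p, m.q) ∈ T.edges ∧
  s(m.p, m.q) ∉ ({s(m.u, m.v), s(m.v, m.a), s(m.v, m.b)} : Finset (Sym2 ℕ)) ∧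
  m.w ∉ T.verts ∧
  T.label m.v = none ∧ T.label m.w = none ∧
  T'.verts = insert m.w (T.verts.erase m.v) ∧
  T'.edges = (T.edges \ {s(m.u, m.v), s(m.v, m.a), s(m.v, m.b), s(m.p, m.q)}) ∪
      {s(m.a, m.b), s(m.p, m.w), s(m.w, m.q), s(m.u, m.w)} ∧
  T'.label = T.label

/-- A replug move: an arbitrary prune-and-reattach move (the result need
not be a tree). -/
def ReplugStep (T T' : PGraph L) : Prop := ∃ m : Move, ApplyMove T m T'

/-- The side condition making a prune-and-reattach move an SPR move:
the reattachment edge `(p,q)` lies in the component `T_v` of the cut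
edge (so the result is again a tree). -/
def IsSPRMoveOn (T : PGraph L) (m : Move) : Prop :=
  T.ReachAvoiding {s(m.u, m.v)} m.v m.p

/-- An unrooted SPR move. -/
def SPRStep (T T' : PGraph L) : Prop := ∃ m : Move, ApplyMove T m T' ∧ IsSPRMoveOn T m

/-- The data of a TBR move in which both endpoints of the bisected edge
`(u,v)` move: `a,b` (resp. `c,d`) are the other neighbours of `v`
(resp. `u`); the fresh node `w1` subdivides the edge `(p,q)` of `T_v`
and the fresh node `w2` subdivides the edge `(r,t)` of `T_u`; the new
edge is `(w1,w2)` and both `u` and `v` are suppressed. -/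
structure Move2 where
  u : ℕ
  v : ℕ
  a : ℕ
  b : ℕ
  c : ℕ
  d : ℕ
  p : ℕ
  q : ℕ
  r : ℕ
  t : ℕ
  w1 : ℕ
  w2 : ℕ
deriving DecidableEq, Inhabited

def ApplyTBRBoth (T : PGraph L) (m : Move2) (T' : PGraph L) : Prop :=
  s(m.u, m.v) ∈ T.edges ∧ m.u ≠ m.v ∧
  m.a ≠ m.b ∧ m.a ≠ m.u ∧ m.b ≠ m.u ∧ m.a ≠ m.v ∧ m.b ≠ m.v ∧
  m.c ≠ m.d ∧ m.c ≠ m.u ∧ m.d ≠ m.u ∧ m.c ≠ m.v ∧ m.d ≠ m.v ∧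
  T.edges.filter (fun e => m.v ∈ e) =
    ({s(m.u, m.v), s(m.v, m.a), s(m.v, m.b)} : Finset (Sym2 ℕ)) ∧
  T.edges.filter (fun e => m.u ∈ e) =
    ({s(m.u, m.v), s(m.u, m.c), s(m.u, m.d)} : Finset (Sym2 ℕ)) ∧
  s(m.p, m.q) ∈ T.edges ∧
  s(m.p, m.q) ∉ ({s(m.u, m.v), s(m.v, m.a), s(m.v, m.b)} : Finset (Sym2 ℕ)) ∧
  T.ReachAvoiding {s(m.u, m.v)} m.v m.p ∧
  s(m.r, m.t) ∈ T.edges ∧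
  s(m.r, m.t) ∉ ({s(m.u, m.v), s(m.u, m.c), s(m.u, m.d)} : Finset (Sym2 ℕ)) ∧
  T.ReachAvoiding {s(m.u, m.v)} m.u m.r ∧
  m.w1 ∉ T.verts ∧ m.w2 ∉ T.verts ∧ m.w1 ≠ m.w2 ∧
  T.label m.u = none ∧ T.label m.v = none ∧
  T.label m.w1 = none ∧ T.label m.w2 = none ∧
  T'.verts = insert m.w1 (insert m.w2 ((T.verts.erase m.u).erase m.v)) ∧
  T'.edges = (T.edges \
      {s(m.u, m.v), s(m.v, m.a), s(m.v, m.b), s(m.u, m.c), s(m.u, m.d),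
        s(m.p, m.q), s(m.r, m.t)}) ∪
      {s(m.a, m.b), s(m.c, m.d), s(m.p, m.w1), s(m.w1, m.q), s(m.r, m.w2),
        s(m.w2, m.t), s(m.w1, m.w2)} ∧
  T'.label = T.label

/-- A TBR move: either an SPR move (one endpoint of the bisected edge is
reintroduced on its own side) or a move displacing both endpoints. -/
def TBRStep (T T' : PGraph L) : Prop :=
  SPRStep T T' ∨ ∃ m : Move2, ApplyTBRBoth T m T'

/-! ### Distances -/

/-- `StepSeq step n G H`: `H` is obtained from `G` by exactly `n` `step`-moves. -/
def StepSeq (step : PGraph L → PGraph L → Prop) : ℕ → PGraph L → PGraph L → Prop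
  | 0, G, H => G = H
  | n + 1, G, H => ∃ G', step G G' ∧ StepSeq step n G' H

/-- The minimum number of `step`-moves transforming `T1` into (a tree
isomorphic to) `T2`. -/
def relDist (step : PGraph L → PGraph L → Prop) (T1 T2 : PGraph L) : ℕ :=
  sInf {n : ℕ | ∃ T', StepSeq step n T1 T' ∧ PGraph.Isom T' T2}

/-- The unrooted SPR distance. -/
def dSPR (T1 T2 : PGraph L) : ℕ := relDist SPRStep T1 T2

/-- The TBR distance. -/
def dTBR (T1 T2 : PGraph L) : ℕ := relDist TBRStep T1 T2

/-- The replug distance. -/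
def dRep (T1 T2 : PGraph L) : ℕ := relDist ReplugStep T1 T2

/-! ### Explicit move sequences -/

/-- Apply a list of replug moves. -/
def ApplySeq : PGraph L → List Move → PGraph L → Prop
  | G, [], H => G = H
  | G, m :: ms, H => ∃ G', ApplyMove G m G' ∧ ApplySeq G' ms H

/-- Apply a list of SPR moves. -/
def ApplySeqSPR : PGraph L → List Move → PGraph L → Prop
  | G, [], H => G = H
  | G, m :: ms, H => ∃ G', ApplyMove G m G' ∧ IsSPRMoveOn G m ∧ ApplySeqSPR G' ms H

/-- Apply a list of replug moves, all whose intermediate configurations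
satisfy the predicate `P`. -/
def ApplySeqMid (P : PGraph L → Prop) : PGraph L → List Move → PGraph L → Prop
  | G, [], H => G = H
  | G, m :: ms, H => ∃ G', ApplyMove G m G' ∧ P G' ∧ ApplySeqMid P G' ms H

def ReplugTransforms (T1 : PGraph L) (M : List Move) (T2 : PGraph L) : Prop :=
  ∃ T', ApplySeq T1 M T' ∧ PGraph.Isom T' T2

/-- `M` is a minimum-length sequence of replug moves from `T1` to `T2`. -/
def OptimalReplugSeq (T1 T2 : PGraph L) (M : List Move) : Prop :=
  ReplugTransforms T1 M T2 ∧ ∀ M', ReplugTransforms T1 M' T2 → M.length ≤ M'.length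

def SPRTransforms (T1 : PGraph L) (M : List Move) (T2 : PGraph L) : Prop :=
  ∃ T', ApplySeqSPR T1 M T' ∧ PGraph.Isom T' T2

/-- `M` is a minimum-length sequence of SPR moves from `T1` to `T2`. -/
def OptimalSPRSeq (T1 T2 : PGraph L) (M : List Move) : Prop :=
  SPRTransforms T1 M T2 ∧ ∀ M', SPRTransforms T1 M' T2 → M.length ≤ M'.length

/-! ### Tracking the identity of a moved edge endpoint along a sequence -/

/-- Track the identity of an edge with a distinguished endpoint through a
move, following the natural mapping between consecutive configurations.
`t = (f, x)` records the edge `(f, x)` with distinguished ("moved")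
endpoint `x`.  The track is lost (`none`) if the edge is cut at its
distinguished endpoint or subdivided. -/
def trackStep (m : Move) (t : ℕ × ℕ) : Option (ℕ × ℕ) :=
  if s(m.u, m.v) = s(t.1, t.2) then
    (if m.v = t.2 then none else some (m.w, t.2))
  else if s(m.p, m.q) = s(t.1, t.2) then none
  else if m.v = t.1 then some (if t.2 = m.a then (m.b, t.2) else (m.a, t.2))
  else if m.v = t.2 then some (t.1, if t.1 = m.a then m.b else m.a)
  else some t

def trackList : List Move → ℕ × ℕ → Option (ℕ × ℕ)
  | [], t => some t
  | m :: ms, t => (trackStep m t).bind (trackList ms)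

/-- Some two distinct moves of `M` move the same endpoint of the same
edge: the `i`-th move leaves the moved endpoint of its cut edge at the
fresh node `w`; tracking this edge-endpoint through the intermediate
moves, the `j`-th move cuts the same edge at the same endpoint. -/
def MovesSameEndpointTwice (M : List Move) : Prop :=
  ∃ i j : ℕ, i < j ∧ j < M.length ∧
    ∃ t : ℕ × ℕ,
      trackList ((M.drop (i + 1)).take (j - i - 1)) ((M[i]!).u, (M[i]!).w) = some t ∧
      s((M[j]!).u, (M[j]!).v) = s(t.1, t.2) ∧ (M[j]!).v = t.2

/-! ### Suppression and induced forests -/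

/-- One elementary suppression: remove an unlabeled degree-2 vertex
(merging its two incident edges), or delete an unlabeled vertex of
degree at most 1. -/
def SuppressStep (G G' : PGraph L) : Prop :=
  (∃ v a b : ℕ, v ∈ G.verts ∧ G.label v = none ∧ a ≠ b ∧ a ≠ v ∧ b ≠ v ∧
      G.edges.filter (fun e => v ∈ e) = ({s(v, a), s(v, b)} : Finset (Sym2 ℕ)) ∧
      G'.verts = G.verts.erase v ∧
      G'.edges = (G.edges \ {s(v, a), s(v, b)}) ∪ {s(a, b)} ∧
      G'.label = G.label) ∨
  (∃ v : ℕ, v ∈ G.verts ∧ G.label v = none ∧ G.degree v ≤ 1 ∧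
      G'.verts = G.verts.erase v ∧
      G'.edges = G.edges.filter (fun e => v ∉ e) ∧
      G'.label = G.label)

/-- No unlabeled vertex of degree less than 3 remains. -/
def Reduced (G : PGraph L) : Prop := ∀ v ∈ G.verts, G.label v = none → 3 ≤ G.degree v

/-- `G` yields `G'` by exhaustively suppressing unlabeled vertices of
degree less than 3. -/
def Yields (G G' : PGraph L) : Prop :=
  Relation.ReflTransGen SuppressStep G G' ∧ Reduced G'

def deleteEdges (G : PGraph L) (E : Finset (Sym2 ℕ)) : PGraph L :=
  ⟨G.verts, G.edges \ E, G.label⟩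

/-- `F` is the forest obtained from `G` by cutting the edge set `E`
(and suppressing), up to isomorphism. -/
def ForestOfVia (F G : PGraph L) (E : Finset (Sym2 ℕ)) : Prop :=
  E ⊆ G.edges ∧ ∃ F', Yields (deleteEdges G E) F' ∧ PGraph.Isom F' F

/-- `F` is a forest of `G`. -/
def ForestOf (F G : PGraph L) : Prop := ∃ E, ForestOfVia F G E

/-- Agreement forest of `T1` and `T2`. -/
def IsAF (F T1 T2 : PGraph L) : Prop := ForestOf F T1 ∧ ForestOf F T2

/-- A maximal agreement forest: an AF which is not a forest of any other
AF of the trees. -/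
def IsMaximalAF (F T1 T2 : PGraph L) : Prop :=
  IsAF F T1 T2 ∧ ∀ F', IsAF F' T1 T2 → ForestOf F F' → PGraph.Isom F' F

/-- A maximum agreement forest: an AF with the fewest components. -/
def IsMAF (F T1 T2 : PGraph L) : Prop :=
  IsAF F T1 T2 ∧ ∀ F', IsAF F' T1 T2 → F.numComponents ≤ F'.numComponents

/-! ### Splits, clusters and pendant subtrees -/

/-- The labels appearing on the `u`-side of the edge `(u,v)`. -/
def sideLabels (G : PGraph L) (u v : ℕ) : Set L :=
  {x | ∃ w ∈ G.verts, G.label w = some x ∧ G.ReachAvoiding {s(u, v)} u w}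

/-- The edge `(u,v)` of the tree `T` induces the bipartition `(A, Aᶜ)`
of the label set. -/
def InducesSplit (T : PGraph L) (A : Set L) : Prop :=
  ∃ u v, s(u, v) ∈ T.edges ∧ sideLabels T u v = A ∧ sideLabels T v u = Aᶜ

/-- The (possibly disconnected) configuration `G` respects the
bipartition `(A, Aᶜ)`: some edge has only `A`-labels on one side and
only `Aᶜ`-labels on the other. -/
def RespectsSplit (G : PGraph L) (A : Set L) : Prop :=
  ∃ u v, s(u, v) ∈ G.edges ∧ sideLabels G u v ⊆ A ∧ sideLabels G v u ⊆ Aᶜ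

/-- The vertices on the `r`-side of the edge `(u,r)`. -/
def sideVerts (T : PGraph L) (u r : ℕ) : Finset ℕ :=
  T.verts.filter (fun w => T.ReachAvoiding {s(u, r)} r w)

/-- The pendant subtree attached at `r` across the edge `(u,r)`. -/
def subtreeAt (T : PGraph L) (u r : ℕ) : PGraph L :=
  ⟨sideVerts T u r, T.edges.filter (fun e => ∀ v ∈ e, v ∈ sideVerts T u r), T.label⟩

/-- Replace the pendant subtree attached at `r` across the edge `(u,r)`
by the single leaf `r`, now labeled `y`. -/
def reduceSubtree (T : PGraph L) (u r : ℕ) (y : L) : PGraph L :=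
  ⟨T.verts.filter (fun w => w = r ∨ w ∉ sideVerts T u r),
   T.edges.filter (fun e => ∀ v ∈ e, v = r ∨ v ∉ sideVerts T u r),
   fun w => if w = r then some y else T.label w⟩

/-! ### X-φ-forests and endpoint agreement forests -/

/-- View an `X`-labeled graph as an `X`-φ-labeled graph with no φ-nodes.
(A vertex label `some none` denotes a φ-node.) -/
def toPhi {X : Type} (T : PGraph X) : PGraph (Option X) :=
  ⟨T.verts, T.edges, fun v => (T.label v).map some⟩

/-- An `X`-φ-forest on label set `s`: an acyclic graph, vertices of
degree 0, 1 or 3, leaves labeled (by `X`-labels, bijectively with `s`,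
or by φ), internal vertices of degree 3 unlabeled. -/
def IsPhiForestOn {X : Type} (s : Set X) (F : PGraph (Option X)) : Prop :=
  F.WF ∧ F.Acyclic ∧
  (∀ v ∈ F.verts, F.degree v = 0 ∨ F.degree v = 1 ∨ F.degree v = 3) ∧
  (∀ v ∈ F.verts, (F.label v).isSome ↔ F.degree v ≤ 1) ∧
  (∀ v ∈ F.verts, F.label v = some none → F.degree v = 1) ∧
  (∀ v ∈ F.verts, ∀ x : X, F.label v = some (some x) → x ∈ s) ∧
  ∀ x ∈ s, ∃! v, v ∈ F.verts ∧ F.label v = some (some x)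

def IsPhiForest {X : Type} (F : PGraph (Option X)) : Prop :=
  IsPhiForestOn Set.univ F

/-- An endpoint edge: an edge together with a proper subset of its
endpoints (`keep = some k` marks the augmented endpoint `k`, which
receives a φ-node when the edge is cut; `keep = none` marks no
endpoint). -/
structure EEdge where
  e : Sym2 ℕ
  keep : Option ℕ
deriving DecidableEq

/-- `E` is a set of endpoint edges of `T`. -/
def EEdgeSetOK {X : Type} (T : PGraph (Option X)) (E : Finset EEdge) : Prop :=
  (∀ ee ∈ E, ee.e ∈ T.edges ∧ ¬ee.e.IsDiag ∧ ∀ k : ℕ, ee.keep = some k → k ∈ ee.e) ∧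
  (∀ ee ∈ E, ∀ k : ℕ, ee.keep = some k → T.label k ≠ some none) ∧
  ∀ ee ∈ E, ∀ ee' ∈ E, ee.e = ee'.e → ee = ee'

/-- `G` is the result of cutting the endpoint edge set `E` in `T`:
the edges of `E` are deleted and a fresh φ-leaf is attached to each
augmented endpoint. -/
def CutEEdges {X : Type} (T : PGraph (Option X)) (E : Finset EEdge)
    (G : PGraph (Option X)) : Prop :=
  EEdgeSetOK T E ∧
  ∃ φf : EEdge → ℕ, Set.InjOn φf ↑E ∧ (∀ ee ∈ E, φf ee ∉ T.verts) ∧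
    G.verts = T.verts ∪ (E.filter (fun ee => ee.keep ≠ none)).image φf ∧
    G.edges = (T.edges \ E.image (fun ee => ee.e)) ∪
      (E.filter (fun ee => ee.keep ≠ none)).image
        (fun ee => s(ee.keep.getD 0, φf ee)) ∧
    (∀ v ∈ T.verts, G.label v = T.label v) ∧
    (∀ ee ∈ E, ee.keep ≠ none → G.label (φf ee) = some none) ∧
    ∀ v : ℕ, v ∉ G.verts → G.label v = none

/-- `F` is an endpoint forest of `T`: it is obtained, up to isomorphism,
by cutting an endpoint edge set of `T` and suppressing. -/
def EndpointForestOf {X : Type} (F T : PGraph (Option X)) : Prop :=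
  ∃ E G F', CutEEdges T E G ∧ Yields G F' ∧ PGraph.Isom F' F

/-- An endpoint agreement forest (EAF) of the `X`-trees `T1` and `T2`. -/
def IsEAF {X : Type} (F : PGraph (Option X)) (T1 T2 : PGraph X) : Prop :=
  IsPhiForest F ∧ EndpointForestOf F (toPhi T1) ∧ EndpointForestOf F (toPhi T2)

/-- Number of φ-nodes of an `X`-φ-forest. -/
def phiCount {X : Type} (F : PGraph (Option X)) : ℕ :=
  (F.verts.filter (fun v => F.label v = some none)).card

/-- The weight `ω(F) = 2(|F| - 1) - q(F)` of an `X`-φ-forest. -/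
def weight {X : Type} (F : PGraph (Option X)) : ℤ :=
  2 * ((F.numComponents : ℤ) - 1) - (phiCount F : ℤ)

/-- The minimum weight of an endpoint agreement forest of `T1` and `T2`. -/
def minEAFWeight {X : Type} (T1 T2 : PGraph X) : ℤ :=
  sInf {w : ℤ | ∃ F, IsEAF F T1 T2 ∧ weight F = w}

/-- Delete the φ-leaves (and their pendant edges) of an `X`-φ-forest. -/
def removePhi {X : Type} (F : PGraph (Option X)) : PGraph (Option X) :=
  ⟨F.verts.filter (fun v => F.label v ≠ some none),
   F.edges.filter (fun e => ∀ v ∈ e, F.label v ≠ some none),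
   fun v => if F.label v = some none then none else F.label v⟩

/-- `Fu` is the agreement forest underlying the EAF `F`: delete the
φ-nodes and suppress the resulting degree-2 vertices. -/
def UnderlyingAF {X : Type} (F Fu : PGraph (Option X)) : Prop :=
  ∃ F', Yields (removePhi F) F' ∧ PGraph.Isom F' Fu

/-- A maximal EAF: an EAF whose underlying agreement forest is a maximal
agreement forest. -/
def IsMEAF {X : Type} (F : PGraph (Option X)) (T1 T2 : PGraph X) : Prop :=
  IsEAF F T1 T2 ∧
  ∃ Fu, UnderlyingAF F Fu ∧ IsMaximalAF Fu (toPhi T1) (toPhi T2)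

/-! ### Socket forests -/

/-- A socket forest: a forest with a distinguished set of socket nodes. -/
structure SocketForest (L : Type) where
  graph : PGraph L
  sockets : Finset ℕ

def SocketForest.WF (S : SocketForest L) : Prop :=
  S.graph.WF ∧ S.graph.Acyclic ∧ S.sockets ⊆ S.graph.verts ∧
  ∀ v ∈ S.sockets, S.graph.label v = none

/-- A connection set: a list of connections, each joining two sockets;
connections keep their identity (their position in the list). -/
abbrev ConnSet := List (ℕ × ℕ)

def ConnOK (S : SocketForest L) (C : ConnSet) : Prop :=
  ∀ c ∈ C, c.1 ∈ S.sockets ∧ c.2 ∈ S.sockets ∧ c.1 ≠ c.2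

/-- Add the connections of `C` to the socket forest `S`. -/
def realize (S : SocketForest L) (C : ConnSet) : PGraph L :=
  ⟨S.graph.verts, S.graph.edges ∪ (C.map (fun c => s(c.1, c.2))).toFinset,
   S.graph.label⟩

/-- Resolve a multifurcation: split an unlabeled vertex of degree at
least 4, separating two of its incident edges onto a fresh neighbour. -/
def ResolveStep (G G' : PGraph L) : Prop :=
  ∃ v x y w : ℕ, v ∈ G.verts ∧ w ∉ G.verts ∧ 4 ≤ G.degree v ∧
    G.label v = none ∧ G.label w = none ∧
    x ≠ y ∧ x ≠ v ∧ y ≠ v ∧ s(v, x) ∈ G.edges ∧ s(v, y) ∈ G.edges ∧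
    G'.verts = insert w G.verts ∧
    G'.edges = (G.edges \ {s(v, x), s(v, y)}) ∪ {s(w, x), s(w, y), s(v, w)} ∧
    G'.label = G.label

/-- The socket forest `S`, with the connection set `C` added, realizes
`T` after resolving multifurcations and suppressing unconnected
sockets. -/
def PermitsVia (S : SocketForest L) (C : ConnSet) (T : PGraph L) : Prop :=
  ConnOK S C ∧ ∃ G1 G2, Relation.ReflTransGen ResolveStep (realize S C) G1 ∧
    Yields G1 G2 ∧ PGraph.Isom G2 T

/-- The socket forest `S` permits `T`. -/
def Permits (S : SocketForest L) (T : PGraph L) : Prop := ∃ C, PermitsVia S C T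

/-- A socket agreement forest of `T1` and `T2`. -/
def IsSAF (S : SocketForest L) (T1 T2 : PGraph L) : Prop :=
  S.WF ∧ Permits S T1 ∧ Permits S T2

/-- The forest underlying a socket forest: suppress the (unconnected)
sockets. -/
def UnderlyingForestOf (S : SocketForest L) (F : PGraph L) : Prop :=
  ∃ F', Yields S.graph F' ∧ PGraph.Isom F' F

/-! ### Dead trees and φ-node assignments -/

/-- Two sockets are adjacent in the connection graph of `C`. -/
def connAdj (C : ConnSet) (x y : ℕ) : Prop := (x, y) ∈ C ∨ (y, x) ∈ C

/-- Reachability in the connection graph of `C`; its nontrivial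
connected components correspond to the dead trees of the realized
tree. -/
def connReach (C : ConnSet) : ℕ → ℕ → Prop := Relation.ReflTransGen (connAdj C)

def socketUsed (C : ConnSet) (x : ℕ) : Prop := ∃ c ∈ C, c.1 = x ∨ c.2 = x

/-- The φ-node assignment `A` satisfies every dead tree of the
configuration `C`: each connected component of the connection graph is
adjacent to some socket not assigned a φ-node. -/
def SatisfiesDeadTrees (C : ConnSet) (A : Finset ℕ) : Prop :=
  ∀ x : ℕ, socketUsed C x → ∃ y : ℕ, connReach C x y ∧ y ∉ A

/-- `G` is the graph obtained from the socket forest `S` by attaching a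
fresh φ-leaf to each socket in `A`. -/
def AttachPhis {X : Type} (S : SocketForest (Option X)) (A : Finset ℕ)
    (G : PGraph (Option X)) : Prop :=
  ∃ φf : ℕ → ℕ, Set.InjOn φf ↑A ∧ (∀ a ∈ A, φf a ∉ S.graph.verts) ∧
    G.verts = S.graph.verts ∪ A.image φf ∧
    G.edges = S.graph.edges ∪ A.image (fun a => s(a, φf a)) ∧
    (∀ v ∈ S.graph.verts, G.label v = S.graph.label v) ∧
    ∀ a ∈ A, G.label (φf a) = some none

/-- The assignment of φ-nodes to the sockets `A` of `S` yields an
endpoint agreement forest of `T1` and `T2`. -/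
def AssignmentYieldsEAF {X : Type} (S : SocketForest (Option X)) (A : Finset ℕ)
    (T1 T2 : PGraph X) : Prop :=
  ∃ G F, AttachPhis S A G ∧ Yields G F ∧ IsEAF F T1 T2

/-- The candidate φ-node sockets: the sockets connected to an edge in
both the `T1` configuration `C1` and the `T2` configuration `C2`. -/
def candidateSockets (S : SocketForest L) (C1 C2 : ConnSet) : Finset ℕ :=
  S.sockets.filter (fun x => socketUsed C1 x ∧ socketUsed C2 x)

open Relation Finset

/-!
Put `rawWeight G = 2 (#verts - #edges - 1) - #φ-leaves`, which is `weight` on forests.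
Cutting `E` raises it by `cutCost E`, the sum over `E` of 2 (no augmented endpoint) or 1
(one augmented endpoint), which is positive. Each suppression step deletes an unlabeled vertex
together with one edge, leaving `rawWeight` unchanged, unless the vertex is isolated, which costs 2.
An isolated unlabeled vertex is what remains of an unlabeled component of the cut forest, and
suppression never creates such components. An unlabeled component of the cut forest is a subtree
of degree-3 vertices of `F`, so at least three ends of cut edges lie in it, while an edge of `E`
has at most 2 (resp. 1) ends in unlabeled components. Hence at most `cutCost E / 3` components are
lost and the weight grows by at least `cutCost E / 3 > 0`.

An `X`-tree has weight 0, so every endpoint forest of it has weight at least 0, with equality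
only for the empty cut, i.e. for the tree itself. The forest of isolated leaves is an EAF, so the
infimum is attained.
-/

def EdgeReach (A : Finset (Sym2 ℕ)) : ℕ → ℕ → Prop :=
  ReflTransGen fun x y => s(x, y) ∈ A

def EdgeAcyclic (A : Finset (Sym2 ℕ)) : Prop :=
  ∀ u v, s(u, v) ∈ A → ¬EdgeReach (A \ {s(u, v)}) u v

def EdgesWithin (A : Finset (Sym2 ℕ)) (V : Finset ℕ) : Prop :=
  ∀ e ∈ A, ¬e.IsDiag ∧ ∀ w ∈ e, w ∈ V

def EdgeConnected (A : Finset (Sym2 ℕ)) (V : Finset ℕ) : Prop :=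
  ∀ x ∈ V, ∀ y ∈ V, EdgeReach A x y

namespace EdgeReach

variable {A B : Finset (Sym2 ℕ)} {x y z : ℕ}

lemma refl (A : Finset (Sym2 ℕ)) (x : ℕ) : EdgeReach A x x := ReflTransGen.refl

lemma single (h : s(x, y) ∈ A) : EdgeReach A x y := ReflTransGen.single h

lemma tail (h : EdgeReach A x y) (hyz : s(y, z) ∈ A) : EdgeReach A x z := ReflTransGen.tail h hyz

lemma trans (hxy : EdgeReach A x y) (hyz : EdgeReach A y z) : EdgeReach A x z :=
  ReflTransGen.trans hxy hyz

lemma symm (h : EdgeReach A x y) : EdgeReach A y x := by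
  induction h with
  | refl => exact refl _ _
  | tail _ hyz ih => exact ReflTransGen.head (by rwa [Sym2.eq_swap]) ih

lemma mono (hAB : A ⊆ B) (h : EdgeReach A x y) : EdgeReach B x y :=
  ReflTransGen.mono (fun _ _ h => hAB h) _ _ h

lemma map (f : ℕ → ℕ) (hf : ∀ p q, s(p, q) ∈ A → EdgeReach B (f p) (f q))
    (h : EdgeReach A x y) : EdgeReach B (f x) (f y) :=
  ReflTransGen.lift' f hf x y h

lemma of_forall_edge (hf : ∀ p q, s(p, q) ∈ A → EdgeReach B p q) (h : EdgeReach A x y) :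
    EdgeReach B x y :=
  h.map id hf

lemma eq_of_forall_notMem (hx : ∀ e ∈ A, x ∉ e) (h : EdgeReach A x y) : y = x := by
  induction h with
  | refl => rfl
  | tail _ hyz ih => subst ih; exact absurd (Sym2.mem_mk_left _ _) (hx _ hyz)

lemma restrict_reachable {V : Finset ℕ} (hAV : EdgesWithin A V) (h : EdgeReach A x y) :
    EdgeReach (A.filter fun e => ∀ w ∈ e, w ∈ V.filter (EdgeReach A x)) x y := by
  induction h with
  | refl => exact refl _ _
  | @tail z y hxz hzy ih =>
    refine ih.tail (mem_filter.2 ⟨hzy, fun w hw => mem_filter.2 ⟨(hAV _ hzy).2 w hw, ?_⟩⟩)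
    rcases Sym2.mem_iff.1 hw with rfl | rfl
    exacts [hxz, hxz.tail hzy]

lemma erase_edge (h : EdgeReach A x y) (u v : ℕ) :
    EdgeReach (A.erase s(u, v)) x y ∨ EdgeReach (A.erase s(u, v)) u y ∨
      EdgeReach (A.erase s(u, v)) v y := by
  induction h with
  | refl => exact Or.inl (refl _ _)
  | @tail z y _ hzy ih =>
    by_cases he : s(z, y) = s(u, v)
    · rcases Sym2.eq_iff.1 he with ⟨-, rfl⟩ | ⟨-, rfl⟩
      exacts [Or.inr (Or.inr (refl _ _)), Or.inr (Or.inl (refl _ _))]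
    · have hzy' : s(z, y) ∈ A.erase s(u, v) := mem_erase.2 ⟨he, hzy⟩
      rcases ih with h | h | h
      exacts [Or.inl (h.tail hzy'), Or.inr (Or.inl (h.tail hzy')), Or.inr (Or.inr (h.tail hzy'))]

end EdgeReach

lemma EdgeAcyclic.mono {A B : Finset (Sym2 ℕ)} (hBA : B ⊆ A) (hA : EdgeAcyclic A) :
    EdgeAcyclic B :=
  fun u v huv h => hA u v (hBA huv) (h.mono (sdiff_subset_sdiff hBA le_rfl))

lemma EdgesWithin.filter {A : Finset (Sym2 ℕ)} {V S : Finset ℕ} (hAV : EdgesWithin A V)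
    (p : Sym2 ℕ → Prop) [DecidablePred p] (hS : ∀ e ∈ A, p e → ∀ w ∈ e, w ∈ S) :
    EdgesWithin (A.filter p) S :=
  fun e he => ⟨(hAV e (mem_filter.1 he).1).1, hS e (mem_filter.1 he).1 (mem_filter.1 he).2⟩

lemma EdgesWithin.mem_unreachable_of_not_subset {A : Finset (Sym2 ℕ)} {V : Finset ℕ}
    (hAV : EdgesWithin A V) (u : ℕ) {e : Sym2 ℕ} (he : e ∈ A)
    (hS : ¬∀ w ∈ e, w ∈ V.filter (EdgeReach A u)) :
    ∀ w ∈ e, w ∈ V.filter fun w => ¬EdgeReach A u w := by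
  induction e using Sym2.ind with
  | _ x y =>
  have hiff : EdgeReach A u x ↔ EdgeReach A u y :=
    ⟨fun h => h.tail he, fun h => h.tail (Sym2.eq_swap ▸ he)⟩
  simp only [Sym2.mem_iff, forall_eq_or_imp, forall_eq, mem_filter, hiff,
    (hAV _ he).2 x (Sym2.mem_mk_left _ _), (hAV _ he).2 y (Sym2.mem_mk_right _ _), true_and,
    and_self] at hS ⊢
  exact hS

/-- Removing the bridge `uv` splits the forest into the side `S` of `u` and the rest `T ∋ v`;
when the forest is connected, so are both sides. -/
lemma EdgeAcyclic.exists_split {A : Finset (Sym2 ℕ)} {V : Finset ℕ} (hA : EdgeAcyclic A)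
    (hAV : EdgesWithin A V) {u v : ℕ} (he : s(u, v) ∈ A) :
    ∃ (S T : Finset ℕ) (AIn AOut : Finset (Sym2 ℕ)), AIn ⊂ A ∧ AOut ⊂ A ∧
      EdgesWithin AIn S ∧ EdgesWithin AOut T ∧ S.Nonempty ∧ T.Nonempty ∧
      #S + #T = #V ∧ #AIn + #AOut + 1 = #A ∧
      (EdgeConnected A V → EdgeConnected AIn S ∧ EdgeConnected AOut T) := by
  set A' := A.erase s(u, v)
  have hA'V : EdgesWithin A' V := fun e he => hAV e (mem_of_mem_erase he)
  have hA'A : A' ⊂ A := erase_ssubset he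
  have huv : ¬EdgeReach A' u v := by simpa only [A', erase_eq] using hA u v he
  set S := V.filter (EdgeReach A' u)
  set T := V.filter fun w => ¬EdgeReach A' u w
  set AIn := A'.filter fun e => ∀ w ∈ e, w ∈ S
  set AOut := A'.filter fun e => ¬∀ w ∈ e, w ∈ S
  have hAIn : AIn ⊂ A := (filter_subset _ _).trans_lt hA'A
  have hAOut : AOut ⊂ A := (filter_subset _ _).trans_lt hA'A
  refine ⟨S, T, AIn, AOut, hAIn, hAOut, hA'V.filter _ fun _ _ h => h,
    hA'V.filter _ fun e he h => hA'V.mem_unreachable_of_not_subset u he h,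
    ⟨u, mem_filter.2 ⟨(hAV _ he).2 u (Sym2.mem_mk_left _ _), .refl _ _⟩⟩,
    ⟨v, mem_filter.2 ⟨(hAV _ he).2 v (Sym2.mem_mk_right _ _), huv⟩⟩,
    card_filter_add_card_filter_not _,
    by rw [card_filter_add_card_filter_not, card_erase_add_one he], fun hconn => ⟨?_, ?_⟩⟩
  · exact fun x hx y hy => ((mem_filter.1 hx).2.restrict_reachable hA'V).symm.trans
      ((mem_filter.1 hy).2.restrict_reachable hA'V)
  · suffices hT : ∀ x ∈ T, EdgeReach AOut v x from
      fun x hx y hy => (hT x hx).symm.trans (hT y hy)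
    intro x hx
    obtain ⟨hxV, hux⟩ := mem_filter.1 hx
    have hvx : EdgeReach A' v x := by
      rcases (hconn u ((hAV _ he).2 u (Sym2.mem_mk_left _ _)) x hxV).erase_edge u v
        with h | h | h
      exacts [absurd h hux, absurd h hux, h]
    refine (hvx.restrict_reachable hA'V).mono fun e he' => ?_
    obtain ⟨heA', heR⟩ := mem_filter.1 he'
    refine mem_filter.2 ⟨heA', fun hS => ?_⟩
    induction e using Sym2.ind with
    | _ a b =>
    exact huv ((mem_filter.1 (hS a (Sym2.mem_mk_left _ _))).2.trans
      (mem_filter.1 (heR a (Sym2.mem_mk_left _ _))).2.symm)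

theorem EdgeAcyclic.card_add_one_le {A : Finset (Sym2 ℕ)} {V : Finset ℕ} (hA : EdgeAcyclic A)
    (hAV : EdgesWithin A V) (hV : V.Nonempty) :
    #A + 1 ≤ #V ∧ (EdgeConnected A V → #A + 1 = #V) := by
  induction A using Finset.strongInduction generalizing V with
  | H A ih =>
  rcases A.eq_empty_or_nonempty with rfl | ⟨e, he⟩
  · refine ⟨by simpa using hV.card_pos, fun hconn => ?_⟩
    obtain ⟨x, hx⟩ := hV
    have : V = {x} := eq_singleton_iff_unique_mem.2 ⟨hx, fun y hy =>
      (hconn x hx y hy).eq_of_forall_notMem (by simp)⟩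
    simp [this]
  induction e using Sym2.ind with
  | _ u v =>
  obtain ⟨S, T, AIn, AOut, hIn, hOut, hInS, hOutT, hS, hT, hVcard, hAcard, hconn⟩ :=
    hA.exists_split hAV he
  have ihIn := ih AIn hIn (hA.mono hIn.subset) hInS hS
  have ihOut := ih AOut hOut (hA.mono hOut.subset) hOutT hT
  refine ⟨by omega, fun hAV => ?_⟩
  have := ihIn.2 (hconn hAV).1
  have := ihOut.2 (hconn hAV).2
  omega

namespace PGraph

variable {G G' : PGraph L}

lemma ext {G H : PGraph L} (hv : G.verts = H.verts) (he : G.edges = H.edges)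
    (hl : G.label = H.label) : G = H := by
  cases G
  cases H
  simp_all

lemma WF.label_eq_none_of_notMem (hG : G.WF) {v : ℕ} (hv : v ∉ G.verts) : G.label v = none :=
  Option.not_isSome_iff_eq_none.1 fun h => hv (hG.2 v h)

def IsForest (G : PGraph L) : Prop := G.WF ∧ G.Acyclic

lemma IsForest.edgesWithin (hG : G.IsForest) : EdgesWithin G.edges G.verts := hG.1.1

lemma IsForest.edgeAcyclic (hG : G.IsForest) : EdgeAcyclic G.edges := hG.2

lemma IsForest.card_edges_le (hG : G.IsForest) : #G.edges ≤ #G.verts := by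
  rcases G.verts.eq_empty_or_nonempty with hV | hV
  · have : G.edges = ∅ := eq_empty_of_forall_notMem fun e he => by
      induction e using Sym2.ind with
      | _ x y => simpa [hV] using (hG.edgesWithin _ he).2 x (Sym2.mem_mk_left _ _)
    simp [this]
  · have := (hG.edgeAcyclic.card_add_one_le hG.edgesWithin hV).1
    omega

def component (G : PGraph L) (v : ℕ) : Finset ℕ := G.verts.filter (EdgeReach G.edges v)

def unlabeledComponents (G : PGraph L) : Finset (Finset ℕ) :=
  (G.verts.filter fun v => ∀ w ∈ G.component v, G.label w = none).image G.component

lemma mem_component {v w : ℕ} : w ∈ G.component v ↔ w ∈ G.verts ∧ EdgeReach G.edges v w :=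
  mem_filter

lemma self_mem_component {v : ℕ} (hv : v ∈ G.verts) : v ∈ G.component v :=
  mem_component.2 ⟨hv, .refl _ _⟩

lemma component_eq_of_edgeReach {u v : ℕ} (h : EdgeReach G.edges v u) :
    G.component u = G.component v :=
  filter_congr fun _ _ => ⟨h.trans, h.symm.trans⟩

lemma mem_unlabeledComponents {K : Finset ℕ} :
    K ∈ G.unlabeledComponents ↔
      ∃ v ∈ G.verts, (∀ w ∈ G.component v, G.label w = none) ∧ G.component v = K := by
  simp only [unlabeledComponents, mem_image, mem_filter, and_assoc]

lemma eq_component_of_mem_unlabeledComponents {K : Finset ℕ} (hK : K ∈ G.unlabeledComponents)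
    {u : ℕ} (hu : u ∈ K) : K = G.component u := by
  obtain ⟨v, -, -, rfl⟩ := mem_unlabeledComponents.1 hK
  exact (component_eq_of_edgeReach (mem_component.1 hu).2).symm

lemma label_eq_none_of_mem_unlabeledComponents {K : Finset ℕ} (hK : K ∈ G.unlabeledComponents)
    {u : ℕ} (hu : u ∈ K) : G.label u = none := by
  obtain ⟨v, -, hlabel, rfl⟩ := mem_unlabeledComponents.1 hK
  exact hlabel u hu

lemma mem_verts_of_mem_unlabeledComponents {K : Finset ℕ} (hK : K ∈ G.unlabeledComponents)
    {u : ℕ} (hu : u ∈ K) : u ∈ G.verts := by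
  rw [eq_component_of_mem_unlabeledComponents hK hu] at hu
  exact (mem_component.1 hu).1

lemma nonempty_of_mem_unlabeledComponents {K : Finset ℕ} (hK : K ∈ G.unlabeledComponents) :
    K.Nonempty := by
  obtain ⟨v, hv, -, rfl⟩ := mem_unlabeledComponents.1 hK
  exact ⟨v, self_mem_component hv⟩

lemma mem_of_mem_unlabeledComponents_of_mem_edges (hG : G.WF) {K : Finset ℕ}
    (hK : K ∈ G.unlabeledComponents) {v w : ℕ} (he : s(v, w) ∈ G.edges) (hv : v ∈ K) :
    w ∈ K := by
  rw [eq_component_of_mem_unlabeledComponents hK hv]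
  exact mem_component.2 ⟨(hG.1 _ he).2 w (Sym2.mem_mk_right _ _), .single he⟩

lemma pairwiseDisjoint_unlabeledComponents :
    (G.unlabeledComponents : Set (Finset ℕ)).PairwiseDisjoint id := by
  intro K hK K' hK' hne
  refine disjoint_left.2 fun u hu hu' => hne ?_
  rw [eq_component_of_mem_unlabeledComponents hK hu,
    eq_component_of_mem_unlabeledComponents hK' hu']

lemma unlabeledComponents_subset_image_inter (hverts : G'.verts ⊆ G.verts)
    (hlabel : G'.label = G.label)
    (hreach : ∀ x ∈ G'.verts, ∀ y ∈ G'.verts,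
      EdgeReach G'.edges x y ↔ EdgeReach G.edges x y)
    (hdel : ∀ w ∈ G.verts, w ∉ G'.verts → G.label w = none) :
    G'.unlabeledComponents ⊆ G.unlabeledComponents.image (· ∩ G'.verts) := by
  intro K' hK'
  obtain ⟨u, hu, hlabel', rfl⟩ := mem_unlabeledComponents.1 hK'
  refine mem_image.2
    ⟨G.component u, mem_unlabeledComponents.2 ⟨u, hverts hu, fun w hw => ?_, rfl⟩, ?_⟩
  · obtain ⟨hwG, huw⟩ := mem_component.1 hw
    by_cases hw' : w ∈ G'.verts
    · rw [← hlabel]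
      exact hlabel' w (mem_component.2 ⟨hw', (hreach u hu w hw').2 huw⟩)
    · exact hdel w hwG hw'
  · ext w
    simp only [mem_inter, mem_component]
    constructor
    · rintro ⟨⟨-, huw⟩, hw⟩
      exact ⟨hw, (hreach u hu w hw).2 huw⟩
    · rintro ⟨hw, huw⟩
      exact ⟨⟨hverts hw, (hreach u hu w hw).1 huw⟩, hw⟩

lemma card_unlabeledComponents_le (hverts : G'.verts ⊆ G.verts) (hlabel : G'.label = G.label)
    (hreach : ∀ x ∈ G'.verts, ∀ y ∈ G'.verts,
      EdgeReach G'.edges x y ↔ EdgeReach G.edges x y)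
    (hdel : ∀ w ∈ G.verts, w ∉ G'.verts → G.label w = none) :
    #G'.unlabeledComponents ≤ #G.unlabeledComponents :=
  (card_le_card (unlabeledComponents_subset_image_inter hverts hlabel hreach hdel)).trans
    card_image_le

lemma card_unlabeledComponents_lt (hverts : G'.verts ⊆ G.verts) (hlabel : G'.label = G.label)
    (hreach : ∀ x ∈ G'.verts, ∀ y ∈ G'.verts,
      EdgeReach G'.edges x y ↔ EdgeReach G.edges x y)
    (hdel : ∀ w ∈ G.verts, w ∉ G'.verts → G.label w = none) {K : Finset ℕ}
    (hK : K ∈ G.unlabeledComponents) (hKdel : Disjoint K G'.verts) :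
    #G'.unlabeledComponents < #G.unlabeledComponents := by
  have hsub :
      G'.unlabeledComponents ⊆ (G.unlabeledComponents.image (· ∩ G'.verts)).erase ∅ :=
    fun K' hK' => mem_erase.2 ⟨(nonempty_of_mem_unlabeledComponents hK').ne_empty,
      unlabeledComponents_subset_image_inter hverts hlabel hreach hdel hK'⟩
  have hempty : ∅ ∈ G.unlabeledComponents.image (· ∩ G'.verts) :=
    mem_image.2 ⟨K, hK, disjoint_iff_inter_eq_empty.1 hKdel⟩
  calc #G'.unlabeledComponents ≤ #(G.unlabeledComponents.image (· ∩ G'.verts)) - 1 := by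
        simpa [card_erase_of_mem hempty] using card_le_card hsub
    _ < #G.unlabeledComponents := by
        have := card_pos.2 ⟨_, hempty⟩
        have := card_image_le (s := G.unlabeledComponents) (f := (· ∩ G'.verts))
        omega

end PGraph

section RawWeight

variable {X : Type} {G G' : PGraph (Option X)}

/-- `weight` with `numComponents` computed as `#verts - #edges` in `ℤ`; the two agree on forests,
where the natural subtraction in `numComponents` does not truncate. -/
def rawWeight (G : PGraph (Option X)) : ℤ :=
  2 * ((#G.verts : ℤ) - #G.edges - 1) - phiCount G

lemma weight_eq_rawWeight (hG : G.IsForest) : weight G = rawWeight G := by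
  have := hG.card_edges_le
  simp only [weight, rawWeight, PGraph.numComponents]
  omega

lemma phiCount_erase {v : ℕ} (hverts : G'.verts = G.verts.erase v) (hlabel : G'.label = G.label)
    (hv : G.label v = none) : phiCount G' = phiCount G := by
  rw [phiCount, hlabel, hverts, filter_erase, erase_eq_of_notMem (by simp [hv])]
  rfl

/-- If no edge is deleted, `v` is isolated and its unlabeled component disappears, which pays for
the loss of 2 in `rawWeight`. -/
lemma rawWeight_sub_le_of_erase {v : ℕ} (hv : v ∈ G.verts) (hvl : G.label v = none)
    (hverts : G'.verts = G.verts.erase v) (hlabel : G'.label = G.label)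
    (hreach : ∀ x ∈ G'.verts, ∀ y ∈ G'.verts,
      EdgeReach G'.edges x y ↔ EdgeReach G.edges x y)
    (hedges : #G'.edges + 1 = #G.edges ∨ (G'.edges = G.edges ∧ ∀ e ∈ G.edges, v ∉ e)) :
    rawWeight G - 2 * #G.unlabeledComponents ≤ rawWeight G' - 2 * #G'.unlabeledComponents := by
  have hsub : G'.verts ⊆ G.verts := hverts ▸ erase_subset _ _
  have hdel : ∀ w ∈ G.verts, w ∉ G'.verts → G.label w = none := fun w hw hw' => by
    rwa [show w = v by by_contra h; exact hw' (hverts ▸ mem_erase.2 ⟨h, hw⟩)]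
  have hVcard : #G'.verts + 1 = #G.verts := hverts ▸ card_erase_add_one hv
  have hphi := phiCount_erase hverts hlabel hvl
  rcases hedges with hedges | ⟨hedges, hisol⟩
  · have := PGraph.card_unlabeledComponents_le hsub hlabel hreach hdel
    simp only [rawWeight, hphi]
    omega
  · have hcomp : ∀ w ∈ G.component v, w = v := fun w hw =>
      (PGraph.mem_component.1 hw).2.eq_of_forall_notMem hisol
    have := PGraph.card_unlabeledComponents_lt hsub hlabel hreach hdel
      (PGraph.mem_unlabeledComponents.2 ⟨v, hv, fun w hw => hcomp w hw ▸ hvl, rfl⟩)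
      (disjoint_left.2 fun w hw => by simp [hcomp w hw, hverts])
    simp only [rawWeight, hphi, hedges]
    omega

end RawWeight

section Smoothing

variable {G G' : PGraph L} {v a b : ℕ}

lemma incident_iff_of_filter_eq_pair (hvE : G.edges.filter (fun e => v ∈ e) = {s(v, a), s(v, b)})
    (e : Sym2 ℕ) : e ∈ G.edges ∧ v ∈ e ↔ e = s(v, a) ∨ e = s(v, b) := by
  simpa using Finset.ext_iff.1 hvE e

lemma smoothing_edgeReach_of_mem (hvE : G.edges.filter (fun e => v ∈ e) = {s(v, a), s(v, b)})
    (hedges : G'.edges = (G.edges \ {s(v, a), s(v, b)}) ∪ {s(a, b)}) {D : Finset (Sym2 ℕ)}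
    (hvD : ∀ f ∈ D, v ∉ f) {p q : ℕ} (hpq : s(p, q) ∈ G'.edges \ D) :
    EdgeReach (G.edges \ D) p q := by
  have hinc := incident_iff_of_filter_eq_pair hvE
  have hav : s(a, v) ∈ G.edges \ D := mem_sdiff.2 ⟨Sym2.eq_swap ▸ ((hinc _).2 (Or.inl rfl)).1,
    fun h => hvD _ h (Sym2.mem_mk_right _ _)⟩
  have hvb : s(v, b) ∈ G.edges \ D := mem_sdiff.2 ⟨((hinc _).2 (Or.inr rfl)).1,
    fun h => hvD _ h (Sym2.mem_mk_left _ _)⟩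
  obtain ⟨hpq, hpqf⟩ := mem_sdiff.1 hpq
  rw [hedges, mem_union, mem_singleton] at hpq
  rcases hpq with hpq | hpq
  · exact .single (mem_sdiff.2 ⟨(mem_sdiff.1 hpq).1, hpqf⟩)
  · rcases Sym2.eq_iff.1 hpq with ⟨rfl, rfl⟩ | ⟨rfl, rfl⟩
    exacts [(EdgeReach.single hav).tail hvb, ((EdgeReach.single hav).tail hvb).symm]

lemma smoothing_edgeReach_iff (hvE : G.edges.filter (fun e => v ∈ e) = {s(v, a), s(v, b)})
    (hav : a ≠ v) (hbv : b ≠ v)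
    (hedges : G'.edges = (G.edges \ {s(v, a), s(v, b)}) ∪ {s(a, b)}) {x y : ℕ} (hx : x ≠ v)
    (hy : y ≠ v) : EdgeReach G'.edges x y ↔ EdgeReach G.edges x y := by
  have hinc := incident_iff_of_filter_eq_pair hvE
  constructor
  · refine EdgeReach.of_forall_edge fun p q hpq => ?_
    simpa using smoothing_edgeReach_of_mem hvE hedges (D := ∅) (by simp) (by simpa using hpq)
  · -- contract the edge `va` onto `a`
    have hab : s(a, b) ∈ G'.edges := by simp [hedges]
    have hf : ∀ p q, s(p, q) ∈ G.edges → EdgeReach G'.edges (Function.update id v a p)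
        (Function.update id v a q) := by
      intro p q hpq
      by_cases hvpq : v ∈ s(p, q)
      · rcases (hinc _).1 ⟨hpq, hvpq⟩ with he | he <;>
          rcases Sym2.eq_iff.1 he with ⟨rfl, rfl⟩ | ⟨rfl, rfl⟩ <;>
          simp only [Function.update_self, Function.update_of_ne hav, Function.update_of_ne hbv, id]
        exacts [.refl _ _, .refl _ _, .single hab, .single (Sym2.eq_swap ▸ hab)]
      · have hp : p ≠ v := fun h => hvpq (h ▸ Sym2.mem_mk_left _ _)
        have hq : q ≠ v := fun h => hvpq (h ▸ Sym2.mem_mk_right _ _)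
        simp only [Function.update_of_ne hp, Function.update_of_ne hq, id]
        refine .single ?_
        rw [hedges]
        exact mem_union_left _
          (mem_sdiff.2 ⟨hpq, fun h => hvpq ((hinc _).2 (by simpa using h)).2⟩)
    exact fun h => by simpa [hx, hy] using h.map _ hf

lemma smoothing_card_edges (hG : G.Acyclic)
    (hvE : G.edges.filter (fun e => v ∈ e) = {s(v, a), s(v, b)}) (hab : a ≠ b) (hav : a ≠ v)
    (hbv : b ≠ v) (hedges : G'.edges = (G.edges \ {s(v, a), s(v, b)}) ∪ {s(a, b)}) :
    #G'.edges + 1 = #G.edges := by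
  have hinc := incident_iff_of_filter_eq_pair hvE
  have hpair : {s(v, a), s(v, b)} ⊆ G.edges := by
    intro e he
    exact ((hinc e).2 (by simpa using he)).1
  -- `s(a, b)` would close the cycle `a v b`
  have hva : s(a, v) ∈ G.edges := by rw [Sym2.eq_swap]; exact hpair (by simp)
  have habE : s(a, b) ∉ G.edges := fun habE => hG a b habE <|
    (EdgeReach.single (mem_sdiff.2 ⟨hva, by simp [hbv.symm, hab]⟩)).tail
      (mem_sdiff.2 ⟨hpair (by simp), by simp [hav.symm, hbv.symm]⟩)
  rw [hedges, card_union_of_disjoint (by simp [habE]), card_sdiff_of_subset hpair,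
    card_pair (by simp [hab, hav]), card_singleton]
  have := card_le_card hpair
  rw [card_pair (by simp [hab, hav])] at this
  omega

lemma notMem_of_mem_sdiff_pair (hvE : G.edges.filter (fun e => v ∈ e) = {s(v, a), s(v, b)})
    {e : Sym2 ℕ} (he : e ∈ G.edges \ {s(v, a), s(v, b)}) : v ∉ e := fun hve =>
  (mem_sdiff.1 he).2 <| by
    simpa using (incident_iff_of_filter_eq_pair hvE e).1 ⟨(mem_sdiff.1 he).1, hve⟩

lemma smoothing_wf (hG : G.WF) (hvl : G.label v = none)
    (hvE : G.edges.filter (fun e => v ∈ e) = {s(v, a), s(v, b)}) (hab : a ≠ b) (hav : a ≠ v)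
    (hbv : b ≠ v) (hverts : G'.verts = G.verts.erase v)
    (hedges : G'.edges = (G.edges \ {s(v, a), s(v, b)}) ∪ {s(a, b)})
    (hlabel : G'.label = G.label) : G'.WF := by
  have hmem : ∀ w ∈ G.verts, w ≠ v → w ∈ G'.verts := fun w hw hwv =>
    hverts ▸ mem_erase.2 ⟨hwv, hw⟩
  refine ⟨fun e he => ?_, fun w hw => ?_⟩
  · rw [hedges, mem_union, mem_singleton] at he
    rcases he with he | rfl
    · have heG := (mem_sdiff.1 he).1
      exact ⟨(hG.1 e heG).1, fun w hw => hmem w ((hG.1 e heG).2 w hw)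
        fun h => notMem_of_mem_sdiff_pair hvE he (h ▸ hw)⟩
    · have hinc := incident_iff_of_filter_eq_pair hvE
      refine ⟨by simpa using hab, fun w hw => ?_⟩
      rcases Sym2.mem_iff.1 hw with rfl | rfl
      exacts [hmem w ((hG.1 _ ((hinc _).2 (Or.inl rfl)).1).2 w (Sym2.mem_mk_right _ _)) hav,
        hmem w ((hG.1 _ ((hinc _).2 (Or.inr rfl)).1).2 w (Sym2.mem_mk_right _ _)) hbv]
  · rw [hlabel] at hw
    exact hmem w (hG.2 w hw) fun h => by simp [h, hvl] at hw

lemma smoothing_acyclic (hG : G.Acyclic)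
    (hvE : G.edges.filter (fun e => v ∈ e) = {s(v, a), s(v, b)}) (hab : a ≠ b) (hbv : b ≠ v)
    (hedges : G'.edges = (G.edges \ {s(v, a), s(v, b)}) ∪ {s(a, b)}) : G'.Acyclic := by
  have hinc := incident_iff_of_filter_eq_pair hvE
  intro x y hxy hr
  change EdgeReach (G'.edges \ {s(x, y)}) x y at hr
  by_cases hxyab : s(x, y) = s(a, b)
  · -- a path from `a` to `b` avoiding `ab` closes the cycle `a ⋯ b v a`
    have hsub : G'.edges \ {s(a, b)} ⊆ G.edges \ {s(v, a)} := fun e he => by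
      simp only [hedges, mem_sdiff, mem_union, mem_insert, mem_singleton] at he ⊢
      tauto
    have hab' : EdgeReach (G.edges \ {s(v, a)}) a b := by
      rw [hxyab] at hr
      rcases Sym2.eq_iff.1 hxyab with ⟨rfl, rfl⟩ | ⟨rfl, rfl⟩
      exacts [hr.mono hsub, (hr.mono hsub).symm]
    have hvb : s(v, b) ∈ G.edges \ {s(v, a)} :=
      mem_sdiff.2 ⟨((hinc _).2 (Or.inr rfl)).1, by simp [hab.symm, hbv]⟩
    exact hG v a ((hinc _).2 (Or.inl rfl)).1 ((EdgeReach.single hvb).trans hab'.symm)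
  · have hxyG : s(x, y) ∈ G.edges \ {s(v, a), s(v, b)} := by
      simpa [hedges, hxyab] using hxy
    exact hG x y (mem_sdiff.1 hxyG).1 <| hr.of_forall_edge fun p q hpq =>
      smoothing_edgeReach_of_mem hvE hedges
        (by simpa using notMem_of_mem_sdiff_pair hvE hxyG) hpq

end Smoothing

section Deletion

variable {G G' : PGraph L} {v : ℕ}

lemma exists_neighbor_of_degree_le_one (hG : G.WF) (hdeg : G.degree v ≤ 1) :
    ∃ k, k ≠ v ∧ ∀ e ∈ G.edges, v ∈ e → e = s(v, k) := by
  rcases (G.edges.filter fun e => v ∈ e).eq_empty_or_nonempty with h | ⟨e₀, he₀⟩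
  · refine ⟨v + 1, by omega, fun e he hve => ?_⟩
    have : e ∈ G.edges.filter fun e => v ∈ e := mem_filter.2 ⟨he, hve⟩
    simp [h] at this
  · obtain ⟨he₀G, hve₀⟩ := mem_filter.1 he₀
    refine ⟨Sym2.Mem.other hve₀, fun h => (hG.1 e₀ he₀G).1 ?_, fun e he hve => ?_⟩
    · rw [← Sym2.other_spec hve₀, h]
      exact Sym2.mk_isDiag_iff.2 rfl
    · rw [Sym2.other_spec hve₀]
      exact card_le_one.1 hdeg e (mem_filter.2 ⟨he, hve⟩) e₀ he₀

lemma deletion_edgeReach_iff (hG : G.WF) (hdeg : G.degree v ≤ 1)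
    (hedges : G'.edges = G.edges.filter fun e => v ∉ e) {x y : ℕ} (hx : x ≠ v)
    (hy : y ≠ v) :
    EdgeReach G'.edges x y ↔ EdgeReach G.edges x y := by
  refine ⟨EdgeReach.mono (hedges ▸ filter_subset _ _), fun h => ?_⟩
  -- contract the pendant edge `vk` onto `k`
  obtain ⟨k, hkv, hk⟩ := exists_neighbor_of_degree_le_one hG hdeg
  have hf : ∀ p q, s(p, q) ∈ G.edges → EdgeReach G'.edges (Function.update id v k p)
      (Function.update id v k q) := by
    intro p q hpq
    by_cases hvpq : v ∈ s(p, q)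
    · rcases Sym2.eq_iff.1 (hk _ hpq hvpq) with ⟨rfl, rfl⟩ | ⟨rfl, rfl⟩ <;>
        simp only [Function.update_self, Function.update_of_ne hkv, id] <;> exact .refl _ _
    · have hp : p ≠ v := fun h => hvpq (h ▸ Sym2.mem_mk_left _ _)
      have hq : q ≠ v := fun h => hvpq (h ▸ Sym2.mem_mk_right _ _)
      simp only [Function.update_of_ne hp, Function.update_of_ne hq, id]
      exact .single (hedges ▸ mem_filter.2 ⟨hpq, hvpq⟩)
  simpa [hx, hy] using h.map _ hf

lemma deletion_card_edges (hedges : G'.edges = G.edges.filter fun e => v ∉ e)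
    (hdeg : G.degree v ≤ 1) :
    #G'.edges + 1 = #G.edges ∨ (G'.edges = G.edges ∧ ∀ e ∈ G.edges, v ∉ e) := by
  have hsum : #G'.edges + G.degree v = #G.edges := by
    rw [hedges, PGraph.degree, add_comm]
    exact card_filter_add_card_filter_not _
  rcases Nat.le_one_iff_eq_zero_or_eq_one.1 hdeg with h0 | h1
  · have hnot : ∀ e ∈ G.edges, v ∉ e := fun e he hve => by
      have : e ∈ G.edges.filter fun e => v ∈ e := mem_filter.2 ⟨he, hve⟩
      simp [card_eq_zero.1 h0] at this
    exact Or.inr ⟨hedges.trans (filter_true_of_mem hnot), hnot⟩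
  · exact Or.inl (by omega)

lemma deletion_isForest (hG : G.IsForest) (hvl : G.label v = none)
    (hverts : G'.verts = G.verts.erase v) (hedges : G'.edges = G.edges.filter fun e => v ∉ e)
    (hlabel : G'.label = G.label) : G'.IsForest := by
  refine ⟨⟨fun e he => ?_, fun w hw => ?_⟩,
    hG.edgeAcyclic.mono (hedges ▸ filter_subset _ _)⟩
  · obtain ⟨heG, hve⟩ := mem_filter.1 (hedges ▸ he)
    exact ⟨(hG.edgesWithin e heG).1, fun w hw =>
      hverts ▸ mem_erase.2 ⟨fun h => hve (h ▸ hw), (hG.edgesWithin e heG).2 w hw⟩⟩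
  · rw [hlabel] at hw
    exact hverts ▸ mem_erase.2 ⟨fun h => by simp [h, hvl] at hw, hG.1.2 w hw⟩

end Deletion

section SuppressStep

variable {G G' : PGraph L}

lemma SuppressStep.isForest (h : SuppressStep G G') (hG : G.IsForest) : G'.IsForest := by
  rcases h with ⟨v, a, b, -, hvl, hab, hav, hbv, hvE, hverts, hedges, hlabel⟩ |
    ⟨v, -, hvl, -, hverts, hedges, hlabel⟩
  exacts [⟨smoothing_wf hG.1 hvl hvE hab hav hbv hverts hedges hlabel,
      smoothing_acyclic hG.2 hvE hab hbv hedges⟩,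
    deletion_isForest hG hvl hverts hedges hlabel]

lemma isForest_of_suppress (h : ReflTransGen SuppressStep G G') (hG : G.IsForest) :
    G'.IsForest := by
  induction h with
  | refl => exact hG
  | tail _ hstep ih => exact hstep.isForest ih

end SuppressStep

section Suppression

variable {X : Type} {G G' : PGraph (Option X)}

lemma SuppressStep.rawWeight_sub_le (h : SuppressStep G G') (hG : G.IsForest) :
    rawWeight G - 2 * #G.unlabeledComponents ≤ rawWeight G' - 2 * #G'.unlabeledComponents := by
  rcases h with ⟨v, a, b, hv, hvl, hab, hav, hbv, hvE, hverts, hedges, hlabel⟩ |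
    ⟨v, hv, hvl, hdeg, hverts, hedges, hlabel⟩
  · refine rawWeight_sub_le_of_erase hv hvl hverts hlabel (fun x hx y hy => ?_)
      (Or.inl (smoothing_card_edges hG.2 hvE hab hav hbv hedges))
    exact smoothing_edgeReach_iff hvE hav hbv hedges (ne_of_mem_erase (hverts ▸ hx))
      (ne_of_mem_erase (hverts ▸ hy))
  · refine rawWeight_sub_le_of_erase hv hvl hverts hlabel (fun x hx y hy => ?_)
      (deletion_card_edges hedges hdeg)
    exact deletion_edgeReach_iff hG.1 hdeg hedges (ne_of_mem_erase (hverts ▸ hx))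
      (ne_of_mem_erase (hverts ▸ hy))

lemma rawWeight_sub_le_of_suppress (h : ReflTransGen SuppressStep G G') (hG : G.IsForest) :
    rawWeight G - 2 * #G.unlabeledComponents ≤ rawWeight G' - 2 * #G'.unlabeledComponents := by
  induction h with
  | refl => exact le_rfl
  | tail hGG' hstep ih => exact ih.trans (hstep.rawWeight_sub_le (isForest_of_suppress hGG' hG))

end Suppression

section Counting

lemma sum_card_filter_mem_comm {β : Type*} (B : Finset ℕ) (E : Finset β) (f : β → Sym2 ℕ) :
    ∑ v ∈ B, #(E.filter fun e => v ∈ f e) = ∑ e ∈ E, #(B.filter fun v => v ∈ f e) :=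
  sum_card_bipartiteAbove_eq_sum_card_bipartiteBelow _

lemma card_filter_mem_pair {B : Finset ℕ} {x y : ℕ} (hxy : x ≠ y) (hx : x ∈ B)
    (hy : y ∈ B) :
    #(B.filter fun v => v ∈ s(x, y)) = 2 := by
  have : B.filter (fun v => v ∈ s(x, y)) = {x, y} := by
    ext v
    simp only [mem_filter, Sym2.mem_iff, mem_insert, mem_singleton, and_iff_right_iff_imp]
    rintro (rfl | rfl) <;> assumption
  rw [this, card_pair hxy]

lemma card_filter_mem_le_two (B : Finset ℕ) (e : Sym2 ℕ) :
    #(B.filter fun v => v ∈ e) ≤ 2 := by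
  induction e using Sym2.ind with
  | _ x y => exact (card_le_card fun v hv => by simpa using (mem_filter.1 hv).2).trans card_le_two

lemma card_filter_mem_le_one {B : Finset ℕ} {e : Sym2 ℕ} {k : ℕ} (hk : k ∈ e)
    (hkB : k ∉ B) :
    #(B.filter fun v => v ∈ e) ≤ 1 := by
  refine card_le_one.2 fun v hv w hw => ?_
  rw [← Sym2.other_spec hk] at hv hw
  simp only [mem_filter, Sym2.mem_iff] at hv hw
  rcases hv with ⟨hvB, rfl | rfl⟩ <;> rcases hw with ⟨hwB, rfl | rfl⟩ <;> tauto

lemma sum_card_filter_mem_eq_two_mul {A : Finset (Sym2 ℕ)} {K : Finset ℕ}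
    (hAK : EdgesWithin A K) : ∑ v ∈ K, #(A.filter fun e => v ∈ e) = 2 * #A := by
  rw [mul_comm, ← smul_eq_mul, ← sum_const]
  refine (sum_card_filter_mem_comm K A id).trans (sum_congr rfl fun e he => ?_)
  induction e using Sym2.ind with
  | _ x y =>
  exact card_filter_mem_pair (fun h => (hAK _ he).1 (h ▸ Sym2.mk_isDiag_iff.2 rfl))
    ((hAK _ he).2 x (Sym2.mem_mk_left _ _)) ((hAK _ he).2 y (Sym2.mem_mk_right _ _))

end Counting

lemma IsPhiForest.isForest {X : Type} {F : PGraph (Option X)} (hF : IsPhiForest F) : F.IsForest :=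
  ⟨hF.1, hF.2.1⟩

lemma IsPhiForest.degree_eq_three {X : Type} {F : PGraph (Option X)} (hF : IsPhiForest F) {v : ℕ}
    (hv : v ∈ F.verts) (hvl : F.label v = none) : F.degree v = 3 := by
  have := (hF.2.2.2.1 v hv).not.1 (by simp [hvl])
  rcases hF.2.2.1 v hv with h | h | h <;> omega

section Cut

variable {X : Type} {F G : PGraph (Option X)} {E : Finset EEdge} {φf : EEdge → ℕ}
  {K : Finset ℕ}

def augmented (E : Finset EEdge) : Finset EEdge := E.filter fun ee => ee.keep ≠ none

/-- Cutting an endpoint edge adds a component, worth 2, and a φ-leaf at its augmented endpoint,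
if any, worth -1. -/
def cutCost (E : Finset EEdge) : ℕ := ∑ ee ∈ E, if ee.keep = none then 2 else 1

lemma cutCost_eq (E : Finset EEdge) : (cutCost E : ℤ) = 2 * #E - #(augmented E) := by
  have := card_filter_add_card_filter_not (s := E) (fun ee => ee.keep = none)
  simp only [cutCost, sum_ite, sum_const, smul_eq_mul, mul_one, augmented, ne_eq]
  push_cast
  omega

lemma cutCost_pos (hE : E.Nonempty) : 0 < cutCost E :=
  sum_pos (fun _ _ => by split_ifs <;> norm_num) hE

structure CutVia (F : PGraph (Option X)) (E : Finset EEdge) (φf : EEdge → ℕ)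
    (G : PGraph (Option X)) : Prop where
  ok : EEdgeSetOK F E
  injOn : Set.InjOn φf ↑E
  fresh : ∀ ee ∈ E, φf ee ∉ F.verts
  verts_eq : G.verts = F.verts ∪ (augmented E).image φf
  edges_eq : G.edges = (F.edges \ E.image fun ee => ee.e) ∪
    (augmented E).image fun ee => s(ee.keep.getD 0, φf ee)
  label_of_mem : ∀ v ∈ F.verts, G.label v = F.label v
  label_phi : ∀ ee ∈ E, ee.keep ≠ none → G.label (φf ee) = some none
  label_of_notMem : ∀ v, v ∉ G.verts → G.label v = none

lemma CutEEdges.exists_cutVia (h : CutEEdges F E G) : ∃ φf, CutVia F E φf G := by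
  obtain ⟨hok, φf, h⟩ := h
  obtain ⟨hinj, hfresh, hverts, hedges, hlabel, hphi, hout⟩ := h
  exact ⟨φf, hok, hinj, hfresh, hverts, hedges, hlabel, hphi, hout⟩

namespace CutVia

variable {ee : EEdge}

/-- For `ee ∈ augmented E`, `ee.keep.getD 0` is its augmented endpoint: the default `0` is never
used. -/
lemma keep_mem (h : CutVia F E φf G) (hee : ee ∈ augmented E) : ee.keep.getD 0 ∈ ee.e := by
  obtain ⟨heeE, hk⟩ := mem_filter.1 hee
  obtain ⟨k, hk⟩ := Option.ne_none_iff_exists'.1 hk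
  rw [hk]
  exact (h.ok.1 ee heeE).2.2 k hk

lemma keep_mem_verts (h : CutVia F E φf G) (hF : F.WF) (hee : ee ∈ augmented E) :
    ee.keep.getD 0 ∈ F.verts :=
  (hF.1 _ (h.ok.1 ee (mem_filter.1 hee).1).1).2 _ (h.keep_mem hee)

lemma phi_notMem_verts (h : CutVia F E φf G) (hee : ee ∈ augmented E) : φf ee ∉ F.verts :=
  h.fresh ee (mem_filter.1 hee).1

lemma phi_injOn (h : CutVia F E φf G) : Set.InjOn φf ↑(augmented E) :=
  h.injOn.mono (coe_subset.2 (filter_subset _ _))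

lemma disjoint_verts_image_phi (h : CutVia F E φf G) :
    Disjoint F.verts ((augmented E).image φf) :=
  disjoint_right.2 fun _ hw => by
    obtain ⟨ee, hee, rfl⟩ := mem_image.1 hw
    exact h.phi_notMem_verts hee

lemma card_verts (h : CutVia F E φf G) : #G.verts = #F.verts + #(augmented E) := by
  rw [h.verts_eq, card_union_of_disjoint h.disjoint_verts_image_phi,
    card_image_of_injOn h.phi_injOn]

lemma card_edges (h : CutVia F E φf G) (hF : F.WF) :
    #G.edges + #E = #F.edges + #(augmented E) := by
  have hcut : E.image (fun ee => ee.e) ⊆ F.edges := fun e he => by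
    obtain ⟨ee, hee, rfl⟩ := mem_image.1 he
    exact (h.ok.1 ee hee).1
  have hcutcard : #(E.image fun ee => ee.e) = #E :=
    card_image_of_injOn fun ee hee ee' hee' => h.ok.2.2 ee hee ee' hee'
  have hpendant : Set.InjOn (fun ee => s(ee.keep.getD 0, φf ee)) ↑(augmented E) := by
    intro ee hee ee' hee' heq
    rcases Sym2.eq_iff.1 heq with ⟨-, h2⟩ | ⟨h1, -⟩
    · exact h.phi_injOn hee hee' h2
    · exact absurd (h1 ▸ h.keep_mem_verts hF hee) (h.phi_notMem_verts hee')
  have hdisj : Disjoint (F.edges \ E.image fun ee => ee.e)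
      ((augmented E).image fun ee => s(ee.keep.getD 0, φf ee)) := by
    refine disjoint_right.2 fun e he heF => ?_
    obtain ⟨ee, hee, rfl⟩ := mem_image.1 he
    exact h.phi_notMem_verts hee ((hF.1 _ (mem_sdiff.1 heF).1).2 _ (Sym2.mem_mk_right _ _))
  rw [h.edges_eq, card_union_of_disjoint hdisj, card_sdiff_of_subset hcut, hcutcard,
    card_image_of_injOn hpendant]
  have := card_le_card hcut
  omega

lemma phiCount_eq (h : CutVia F E φf G) : phiCount G = phiCount F + #(augmented E) := by
  have hold : F.verts.filter (fun w => G.label w = some none) =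
      F.verts.filter fun w => F.label w = some none :=
    filter_congr fun w hw => by rw [h.label_of_mem w hw]
  have hnew : ((augmented E).image φf).filter (fun w => G.label w = some none) =
      (augmented E).image φf :=
    filter_true_of_mem fun w hw => by
      obtain ⟨ee, hee, rfl⟩ := mem_image.1 hw
      exact h.label_phi ee (mem_filter.1 hee).1 (mem_filter.1 hee).2
  rw [phiCount, h.verts_eq, filter_union, card_union_of_disjoint
    (disjoint_filter_filter h.disjoint_verts_image_phi), hold, hnew,
    card_image_of_injOn h.phi_injOn, phiCount]

lemma rawWeight_eq (h : CutVia F E φf G) (hF : F.WF) :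
    rawWeight G = rawWeight F + cutCost E := by
  have := h.card_verts
  have := h.card_edges hF
  have := h.phiCount_eq
  have := cutCost_eq E
  simp only [rawWeight]
  omega

lemma mem_edges (h : CutVia F E φf G) {e : Sym2 ℕ} (he : e ∈ G.edges) :
    e ∈ F.edges \ E.image (fun ee => ee.e) ∨
      ∃ ee ∈ augmented E, e = s(ee.keep.getD 0, φf ee) := by
  rw [h.edges_eq, mem_union, mem_image] at he
  exact he.imp id fun ⟨ee, hee, he⟩ => ⟨ee, hee, he.symm⟩

lemma pendant_mem_edges (h : CutVia F E φf G) (hee : ee ∈ augmented E) :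
    s(ee.keep.getD 0, φf ee) ∈ G.edges := by
  rw [h.edges_eq]
  exact mem_union_right _ (mem_image_of_mem _ hee)

lemma eq_pendant_of_phi_mem (h : CutVia F E φf G) (hF : F.WF) (hee : ee ∈ augmented E)
    {e : Sym2 ℕ} (he : e ∈ G.edges) (hφ : φf ee ∈ e) : e = s(ee.keep.getD 0, φf ee) := by
  rcases h.mem_edges he with he | ⟨ee', hee', rfl⟩
  · exact absurd ((hF.1 _ (mem_sdiff.1 he).1).2 _ hφ) (h.phi_notMem_verts hee)
  · rcases Sym2.mem_iff.1 hφ with hφ | hφ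
    · exact absurd (hφ ▸ h.keep_mem_verts hF hee') (h.phi_notMem_verts hee)
    · rw [h.phi_injOn hee hee' hφ]

lemma wf (h : CutVia F E φf G) (hF : F.WF) : G.WF := by
  refine ⟨fun e he => ?_, fun w hw =>
    by_contra fun hwG => by simp [h.label_of_notMem w hwG] at hw⟩
  rcases h.mem_edges he with he | ⟨ee, hee, rfl⟩
  · refine ⟨(hF.1 e (mem_sdiff.1 he).1).1, fun w hw => ?_⟩
    rw [h.verts_eq]
    exact mem_union_left _ ((hF.1 e (mem_sdiff.1 he).1).2 w hw)
  · refine ⟨fun hdiag => h.phi_notMem_verts hee ?_, fun w hw => ?_⟩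
    · rw [← Sym2.mk_isDiag_iff.1 hdiag]
      exact h.keep_mem_verts hF hee
    · rw [h.verts_eq]
      rcases Sym2.mem_iff.1 hw with rfl | rfl
      exacts [mem_union_left _ (h.keep_mem_verts hF hee),
        mem_union_right _ (mem_image_of_mem _ hee)]

def retraction (E : Finset EEdge) (φf : EEdge → ℕ) (w : ℕ) : ℕ :=
  if hw : ∃ ee ∈ augmented E, φf ee = w then hw.choose.keep.getD 0 else w

lemma retraction_of_mem_verts (h : CutVia F E φf G) {w : ℕ} (hw : w ∈ F.verts) :
    retraction E φf w = w :=
  dif_neg fun ⟨_, hee, hφ⟩ => h.phi_notMem_verts hee (hφ ▸ hw)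

lemma retraction_phi (h : CutVia F E φf G) (hee : ee ∈ augmented E) :
    retraction E φf (φf ee) = ee.keep.getD 0 := by
  have hw : ∃ ee' ∈ augmented E, φf ee' = φf ee := ⟨ee, hee, rfl⟩
  rw [retraction, dif_pos hw, h.phi_injOn hw.choose_spec.1 hee hw.choose_spec.2]

lemma edgeReach_retraction (h : CutVia F E φf G) (hF : F.WF) {D : Finset (Sym2 ℕ)} {p q : ℕ}
    (hpq : s(p, q) ∈ G.edges \ D) :
    EdgeReach (F.edges \ D) (retraction E φf p) (retraction E φf q) := by
  obtain ⟨hpqG, hpqD⟩ := mem_sdiff.1 hpq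
  rcases h.mem_edges hpqG with hpqF | ⟨ee, hee, hpend⟩
  · have hpF := (hF.1 _ (mem_sdiff.1 hpqF).1).2 p (Sym2.mem_mk_left _ _)
    have hqF := (hF.1 _ (mem_sdiff.1 hpqF).1).2 q (Sym2.mem_mk_right _ _)
    rw [h.retraction_of_mem_verts hpF, h.retraction_of_mem_verts hqF]
    exact .single (mem_sdiff.2 ⟨(mem_sdiff.1 hpqF).1, hpqD⟩)
  · have hk := h.retraction_of_mem_verts (h.keep_mem_verts hF hee)
    rcases Sym2.eq_iff.1 hpend with ⟨rfl, rfl⟩ | ⟨rfl, rfl⟩ <;>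
      rw [hk, h.retraction_phi hee] <;> exact .refl _ _

lemma isForest (h : CutVia F E φf G) (hF : F.IsForest) : G.IsForest := by
  refine ⟨h.wf hF.1, fun x y hxy hr => ?_⟩
  change EdgeReach (G.edges \ {s(x, y)}) x y at hr
  rcases h.mem_edges hxy with hold | ⟨ee, hee, hpend⟩
  · -- retracting the φ-leaves turns the path into one of `F` avoiding `xy`
    have hx := (hF.edgesWithin _ (mem_sdiff.1 hold).1).2 x (Sym2.mem_mk_left _ _)
    have hy := (hF.edgesWithin _ (mem_sdiff.1 hold).1).2 y (Sym2.mem_mk_right _ _)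
    have := hr.map _ fun p q hpq => h.edgeReach_retraction hF.1 hpq
    rw [h.retraction_of_mem_verts hx, h.retraction_of_mem_verts hy] at this
    exact hF.2 x y (mem_sdiff.1 hold).1 this
  · -- a pendant edge is a bridge: its φ-leaf has no other edge
    have hφ : ∀ e ∈ G.edges \ {s(x, y)}, φf ee ∉ e := fun e he hφe =>
      (mem_sdiff.1 he).2 (mem_singleton.2 (by
        rw [h.eq_pendant_of_phi_mem hF.1 hee (mem_sdiff.1 he).1 hφe, hpend]))
    have hxy' : x ≠ y := fun hxy' => ((h.wf hF.1).1 _ hxy).1 (hxy' ▸ Sym2.mk_isDiag_iff.2 rfl)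
    rcases Sym2.eq_iff.1 hpend with ⟨-, rfl⟩ | ⟨rfl, -⟩
    exacts [hxy' (hr.symm.eq_of_forall_notMem hφ), hxy' (hr.eq_of_forall_notMem hφ).symm]

lemma mem_verts_of_mem_unlabeledComponents (h : CutVia F E φf G)
    (hK : K ∈ G.unlabeledComponents) {v : ℕ} (hv : v ∈ K) :
    v ∈ F.verts ∧ F.label v = none := by
  have hvl := PGraph.label_eq_none_of_mem_unlabeledComponents hK hv
  have hvG := PGraph.mem_verts_of_mem_unlabeledComponents hK hv
  rw [h.verts_eq, mem_union] at hvG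
  rcases hvG with hvF | hvφ
  · exact ⟨hvF, h.label_of_mem v hvF ▸ hvl⟩
  · obtain ⟨ee, hee, rfl⟩ := mem_image.1 hvφ
    simp [h.label_phi ee (mem_filter.1 hee).1 (mem_filter.1 hee).2] at hvl

lemma phi_notMem_unlabeledComponents (h : CutVia F E φf G) (hK : K ∈ G.unlabeledComponents)
    (hee : ee ∈ augmented E) : φf ee ∉ K := fun hφ => by
  simpa [h.label_phi ee (mem_filter.1 hee).1 (mem_filter.1 hee).2] using
    PGraph.label_eq_none_of_mem_unlabeledComponents hK hφ

lemma keep_notMem_unlabeledComponents (h : CutVia F E φf G) (hF : F.WF)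
    (hK : K ∈ G.unlabeledComponents) (hee : ee ∈ augmented E) :
    ee.keep.getD 0 ∉ K := fun hk =>
  h.phi_notMem_unlabeledComponents hK hee <|
    PGraph.mem_of_mem_unlabeledComponents_of_mem_edges (h.wf hF) hK (h.pendant_mem_edges hee) hk

/-- At a vertex of an unlabeled component, the three edges of `F` are either kept inside the
component or cut. -/
lemma card_inner_add_card_cut (h : CutVia F E φf G) (hF : IsPhiForest F)
    (hK : K ∈ G.unlabeledComponents) {v : ℕ} (hv : v ∈ K) :
    #((G.edges.filter fun e => ∀ w ∈ e, w ∈ K).filter fun e => v ∈ e) +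
      #(E.filter fun ee => v ∈ ee.e) = 3 := by
  obtain ⟨hvF, hvl⟩ := h.mem_verts_of_mem_unlabeledComponents hK hv
  set cut := E.image fun ee => ee.e
  have hcut : cut ⊆ F.edges := fun e he => by
    obtain ⟨ee, hee, rfl⟩ := mem_image.1 he
    exact (h.ok.1 ee hee).1
  have hinner : (G.edges.filter fun e => ∀ w ∈ e, w ∈ K).filter (fun e => v ∈ e) =
      (F.edges \ cut).filter fun e => v ∈ e := by
    ext e
    simp only [mem_filter]
    constructor
    · rintro ⟨⟨heG, heK⟩, hve⟩
      refine ⟨?_, hve⟩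
      rcases h.mem_edges heG with he | ⟨ee, hee, rfl⟩
      exacts [he, absurd (heK _ (Sym2.mem_mk_right _ _)) (h.phi_notMem_unlabeledComponents hK hee)]
    · rintro ⟨he, hve⟩
      have heG : e ∈ G.edges := h.edges_eq ▸ mem_union_left _ he
      refine ⟨⟨heG, fun w hw => ?_⟩, hve⟩
      rw [← Sym2.other_spec hve] at heG hw
      rcases Sym2.mem_iff.1 hw with rfl | rfl
      exacts [hv, PGraph.mem_of_mem_unlabeledComponents_of_mem_edges (h.wf hF.1) hK heG hv]
  have hcutv : #(cut.filter fun e => v ∈ e) = #(E.filter fun ee => v ∈ ee.e) := by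
    rw [filter_image]
    exact card_image_of_injOn fun ee hee ee' hee' =>
      h.ok.2.2 ee (mem_filter.1 hee).1 ee' (mem_filter.1 hee').1
  rw [hinner, ← hcutv, ← card_union_of_disjoint (disjoint_filter_filter sdiff_disjoint),
    ← filter_union, sdiff_union_of_subset hcut]
  exact hF.degree_eq_three hvF hvl

/-- Summing the previous identity over `K` gives `3 #K = 2 #inner + #cut ends`, and the inner
edges form a forest on `K`, so `#inner ≤ #K - 1`. -/
lemma three_le_sum_card_cut (h : CutVia F E φf G) (hF : IsPhiForest F)
    (hK : K ∈ G.unlabeledComponents) : 3 ≤ ∑ v ∈ K, #(E.filter fun ee => v ∈ ee.e) := by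
  set inner := G.edges.filter fun e => ∀ w ∈ e, w ∈ K
  have hG := h.isForest hF.isForest
  have hinner : EdgesWithin inner K := fun e he =>
    ⟨(hG.edgesWithin e (mem_filter.1 he).1).1, (mem_filter.1 he).2⟩
  have htree := ((hG.edgeAcyclic.mono (B := inner) (filter_subset _ _)).card_add_one_le hinner
    (PGraph.nonempty_of_mem_unlabeledComponents hK)).1
  have hsum := sum_congr rfl fun v hv => h.card_inner_add_card_cut hF hK hv
  rw [sum_add_distrib, sum_card_filter_mem_eq_two_mul hinner, sum_const, smul_eq_mul] at hsum
  omega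

lemma three_mul_card_unlabeledComponents_le (h : CutVia F E φf G) (hF : IsPhiForest F) :
    3 * #G.unlabeledComponents ≤ cutCost E := by
  set B := G.unlabeledComponents.biUnion id
  have hcap : ∀ ee ∈ E,
      #(B.filter fun v => v ∈ ee.e) ≤ if ee.keep = none then 2 else 1 := by
    intro ee hee
    split_ifs with hk
    · exact card_filter_mem_le_two B ee.e
    · have hee' : ee ∈ augmented E := mem_filter.2 ⟨hee, hk⟩
      refine card_filter_mem_le_one (h.keep_mem hee') fun hkB => ?_
      obtain ⟨K, hK, hkK⟩ := mem_biUnion.1 hkB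
      exact h.keep_notMem_unlabeledComponents hF.1 hK hee' hkK
  calc 3 * #G.unlabeledComponents
      = ∑ _K ∈ G.unlabeledComponents, 3 := by rw [sum_const, smul_eq_mul, mul_comm]
    _ ≤ ∑ K ∈ G.unlabeledComponents, ∑ v ∈ K, #(E.filter fun ee => v ∈ ee.e) :=
        sum_le_sum fun K hK => h.three_le_sum_card_cut hF hK
    _ = ∑ v ∈ B, #(E.filter fun ee => v ∈ ee.e) :=
        (sum_biUnion PGraph.pairwiseDisjoint_unlabeledComponents).symm
    _ = ∑ ee ∈ E, #(B.filter fun v => v ∈ ee.e) := sum_card_filter_mem_comm B E _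
    _ ≤ cutCost E := sum_le_sum hcap

end CutVia

end Cut

theorem weight_lt_weight_of_cut {X : Type} {F G F' : PGraph (Option X)} {E : Finset EEdge}
    (hF : IsPhiForest F) (hE : E.Nonempty) (hcut : CutEEdges F E G) (hy : Yields G F') :
    weight F < weight F' := by
  obtain ⟨φf, h⟩ := hcut.exists_cutVia
  have hG := h.isForest hF.isForest
  have hsuppress := rawWeight_sub_le_of_suppress hy.1 hG
  have hcutWeight := h.rawWeight_eq hF.1
  have hcount := h.three_mul_card_unlabeledComponents_le hF
  have hpos := cutCost_pos hE
  -- `rawWeight F' ≥ rawWeight F + c - 2u` with `3u ≤ c` and `0 < c`, so `c - 2u ≥ c / 3 > 0`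
  rw [weight_eq_rawWeight hF.isForest, weight_eq_rawWeight (isForest_of_suppress hy.1 hG)]
  omega

namespace PGraph.Isom

variable {G H K : PGraph L}

protected lemma refl (G : PGraph L) : G.Isom G :=
  ⟨id, Set.bijOn_id _, fun _ _ _ _ => Iff.rfl, fun _ _ => rfl⟩

protected lemma symm (h : G.Isom H) : H.Isom G := by
  obtain ⟨f, hbij, hedge, hlabel⟩ := h
  have hinv := hbij.invOn_invFunOn
  have hbij' := Set.BijOn.symm hinv.symm hbij
  refine ⟨Function.invFunOn f G.verts, hbij', fun u hu v hv => ?_, fun v hv => ?_⟩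
  · have := hedge _ (hbij'.mapsTo hu) _ (hbij'.mapsTo hv)
    rwa [hinv.2 hu, hinv.2 hv, Iff.comm] at this
  · have := hlabel _ (hbij'.mapsTo hv)
    rwa [hinv.2 hv, eq_comm] at this

protected lemma trans (h₁ : G.Isom H) (h₂ : H.Isom K) : G.Isom K := by
  obtain ⟨f, hf, hfedge, hflabel⟩ := h₁
  obtain ⟨g, hg, hgedge, hglabel⟩ := h₂
  refine ⟨g ∘ f, hg.comp hf, fun u hu v hv => ?_, fun v hv => ?_⟩
  · exact (hfedge u hu v hv).trans (hgedge _ (hf.mapsTo hu) _ (hf.mapsTo hv))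
  · exact (hglabel _ (hf.mapsTo hv)).trans (hflabel v hv)

lemma card_verts (h : G.Isom H) : #G.verts = #H.verts := by
  obtain ⟨f, hbij, -, -⟩ := h
  exact hbij.finsetCard_eq

lemma card_edges (hG : G.WF) (hH : H.WF) (h : G.Isom H) : #G.edges = #H.edges := by
  obtain ⟨f, hbij, hedge, -⟩ := h
  refine Set.BijOn.finsetCard_eq (Sym2.map f) ⟨fun e he => ?_, fun e he e' he' heq => ?_,
    fun e he => ?_⟩
  · induction e using Sym2.ind with
    | _ x y =>
    rw [Finset.mem_coe, Sym2.map_mk]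
    exact (hedge x ((hG.1 _ he).2 x (Sym2.mem_mk_left _ _)) y
      ((hG.1 _ he).2 y (Sym2.mem_mk_right _ _))).1 he
  · induction e using Sym2.ind with
    | _ x y =>
    induction e' using Sym2.ind with
    | _ x' y' =>
    have hx := (hG.1 _ he).2 x (Sym2.mem_mk_left _ _)
    have hy := (hG.1 _ he).2 y (Sym2.mem_mk_right _ _)
    have hx' := (hG.1 _ he').2 x' (Sym2.mem_mk_left _ _)
    have hy' := (hG.1 _ he').2 y' (Sym2.mem_mk_right _ _)
    rw [Sym2.map_mk, Sym2.map_mk, Sym2.eq_iff] at heq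
    rcases heq with ⟨h1, h2⟩ | ⟨h1, h2⟩
    · rw [hbij.injOn hx hx' h1, hbij.injOn hy hy' h2]
    · rw [hbij.injOn hx hy' h1, hbij.injOn hy hx' h2, Sym2.eq_swap]
  · induction e using Sym2.ind with
    | _ x' y' =>
    obtain ⟨x, hx, rfl⟩ := hbij.surjOn ((hH.1 _ he).2 x' (Sym2.mem_mk_left _ _))
    obtain ⟨y, hy, rfl⟩ := hbij.surjOn ((hH.1 _ he).2 _ (Sym2.mem_mk_right _ _))
    exact ⟨s(x, y), (hedge x hx y hy).2 he, Sym2.map_mk _ _ _⟩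

lemma phiCount_eq {X : Type} {G H : PGraph (Option X)} (h : G.Isom H) :
    phiCount G = phiCount H := by
  obtain ⟨f, hbij, -, hlabel⟩ := h
  refine Set.BijOn.finsetCard_eq f
    ⟨fun v hv => ?_, hbij.injOn.mono fun v hv => ?_, fun w hw => ?_⟩
  · obtain ⟨hvG, hvl⟩ := mem_filter.1 hv
    exact mem_filter.2 ⟨hbij.mapsTo hvG, (hlabel v hvG).trans hvl⟩
  · exact (mem_filter.1 hv).1
  · obtain ⟨hwH, hwl⟩ := mem_filter.1 hw
    obtain ⟨v, hv, rfl⟩ := hbij.surjOn hwH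
    exact ⟨v, mem_filter.2 ⟨hv, (hlabel v hv).symm.trans hwl⟩, rfl⟩

lemma weight_eq {X : Type} {G H : PGraph (Option X)} (hG : G.WF) (hH : H.WF) (h : G.Isom H) :
    weight G = weight H := by
  rw [weight, weight, numComponents, numComponents, h.card_verts, h.card_edges hG hH,
    h.phiCount_eq]

end PGraph.Isom

lemma Reduced.eq_of_suppress {G G' : PGraph L} (hG : Reduced G)
    (h : ReflTransGen SuppressStep G G') : G' = G := by
  rcases h.cases_head with rfl | ⟨G₁, hstep, -⟩
  · rfl
  exfalso
  rcases hstep with ⟨v, a, b, hv, hvl, hab, hav, -, hvE, -⟩ | ⟨v, hv, hvl, hdeg, -⟩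
  · have := hG v hv hvl
    rw [PGraph.degree, hvE, card_pair (by simp [hab, hav])] at this
    omega
  · have := hG v hv hvl
    omega

section EmptyCut

variable {X : Type} {G G' : PGraph (Option X)}

lemma cutEEdges_empty (hG : G.WF) : CutEEdges G ∅ G :=
  ⟨⟨by simp, by simp, by simp⟩, fun _ => 0, by simp, by simp, by simp, by simp,
    fun _ _ => rfl, by simp, fun _ => hG.label_eq_none_of_notMem⟩

lemma eq_of_cutEEdges_empty (hG : G.WF) (h : CutEEdges G ∅ G') : G' = G := by
  obtain ⟨φf, h⟩ := h.exists_cutVia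
  have hv : G'.verts = G.verts := by simp [h.verts_eq, augmented]
  refine PGraph.ext hv (by simp [h.edges_eq, augmented]) (funext fun v => ?_)
  by_cases hvG : v ∈ G.verts
  · exact h.label_of_mem v hvG
  · rw [hG.label_eq_none_of_notMem hvG, h.label_of_notMem v (hv ▸ hvG)]

lemma endpointForestOf_self (hG : G.WF) (hred : Reduced G) : EndpointForestOf G G :=
  ⟨∅, G, G, cutEEdges_empty hG, ⟨.refl, hred⟩, .refl G⟩

lemma EndpointForestOf.of_isom {F F' T : PGraph (Option X)} (h : EndpointForestOf F T)
    (hF : F.Isom F') : EndpointForestOf F' T := by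
  obtain ⟨E, G, F'', hcut, hy, hiso⟩ := h
  exact ⟨E, G, F'', hcut, hy, hiso.trans hF⟩

end EmptyCut

section Trees

variable {X : Type} {T T₁ T₂ : PGraph X}

lemma toPhi_wf (hT : T.WF) : (toPhi T).WF :=
  ⟨hT.1, fun v hv => hT.2 v (by simpa [toPhi] using hv)⟩

lemma degree_toPhi (v : ℕ) : (toPhi T).degree v = T.degree v := rfl

lemma toPhi_label_ne_phi (v : ℕ) : (toPhi T).label v ≠ some none := by
  simp [toPhi]

lemma isPhiForest_toPhi (hT : IsXTree T) : IsPhiForest (toPhi T) := by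
  obtain ⟨⟨hwf, -, -, hacy⟩, hdeg, hlabel, -, huniq⟩ := hT
  refine ⟨toPhi_wf hwf, hacy, fun v hv => Or.inr (hdeg v hv), fun v hv => ?_,
    fun v _ h => absurd h (toPhi_label_ne_phi v), fun _ _ _ _ => Set.mem_univ _, fun x _ => ?_⟩
  · rw [degree_toPhi]
    simp only [toPhi, Option.isSome_map, hlabel v hv]
    rcases hdeg v hv with h | h <;> omega
  · simpa [toPhi] using huniq x (Set.mem_univ x)

lemma reduced_toPhi (hT : IsXTree T) : Reduced (toPhi T) := by
  intro v hv hvl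
  have := (hT.2.2.1 v hv).not.1 (by simpa [toPhi] using hvl)
  rcases hT.2.1 v hv with h | h <;> rw [degree_toPhi] <;> omega

lemma weight_toPhi (hT : IsXTree T) : weight (toPhi T) = 0 := by
  obtain ⟨hwf, hne, hconn, hacy⟩ := hT.1
  have htree := (EdgeAcyclic.card_add_one_le (A := T.edges) hacy hwf.1 hne).2 hconn
  have hphi : phiCount (toPhi T) = 0 := by
    simp [phiCount, toPhi_label_ne_phi]
  rw [weight_eq_rawWeight (isPhiForest_toPhi hT).isForest, rawWeight, hphi]
  simp only [toPhi]
  omega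

lemma isom_toPhi_iff : (toPhi T₁).Isom (toPhi T₂) ↔ T₁.Isom T₂ := by
  refine ⟨fun ⟨f, hbij, hedge, hlabel⟩ => ⟨f, hbij, hedge, fun v hv => ?_⟩,
    fun ⟨f, hbij, hedge, hlabel⟩ => ⟨f, hbij, hedge, fun v hv => ?_⟩⟩
  · exact Option.map_injective (Option.some_injective _) (hlabel v hv)
  · simp [toPhi, hlabel v hv]

lemma weight_pos_or_isom_of_endpointForestOf {F : PGraph (Option X)} (hT : IsXTree T)
    (hF : IsPhiForest F) (h : EndpointForestOf F (toPhi T)) :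
    0 < weight F ∨ (toPhi T).Isom F := by
  obtain ⟨E, G, F', hcut, hy, hiso⟩ := h
  rcases E.eq_empty_or_nonempty with rfl | hE
  · rw [eq_of_cutEEdges_empty (toPhi_wf hT.1.1) hcut] at hy
    rw [(reduced_toPhi hT).eq_of_suppress hy.1] at hiso
    exact Or.inr hiso
  · obtain ⟨φf, hcut'⟩ := hcut.exists_cutVia
    have hF' := isForest_of_suppress hy.1 (hcut'.isForest (isPhiForest_toPhi hT).isForest)
    have := weight_lt_weight_of_cut (isPhiForest_toPhi hT) hE hcut hy
    rw [weight_toPhi hT, hiso.weight_eq hF'.1 hF.1] at this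
    exact Or.inl this

end Trees

section LabeledPart

/-- For a tree, the endpoint forest obtained by cutting every edge. -/
def PGraph.labeledPart (G : PGraph L) : PGraph L :=
  ⟨G.verts.filter fun v => (G.label v).isSome, ∅, G.label⟩

lemma yields_labeledPart {H : PGraph L} (hH : H.edges = ∅) : Yields H H.labeledPart := by
  induction hn : #(H.verts.filter fun v => H.label v = none) generalizing H with
  | zero =>
    have hlabeled : ∀ v ∈ H.verts, (H.label v).isSome := fun v hv =>
      Option.isSome_iff_ne_none.2 fun hvl => by simp_all [card_eq_zero, filter_eq_empty_iff]
    have : H.labeledPart = H := PGraph.ext (filter_true_of_mem hlabeled) hH.symm rfl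
    rw [this]
    exact ⟨.refl, fun v hv hvl => by simpa [hvl] using hlabeled v hv⟩
  | succ n ih =>
    obtain ⟨v, hv⟩ := card_pos.1 (by omega : 0 < #(H.verts.filter fun v => H.label v = none))
    obtain ⟨hvH, hvl⟩ := mem_filter.1 hv
    set H' : PGraph L := ⟨H.verts.erase v, ∅, H.label⟩
    have hstep : SuppressStep H H' :=
      Or.inr ⟨v, hvH, hvl, by simp [PGraph.degree, hH], rfl, by simp [hH, H'], rfl⟩
    have hn' : #(H'.verts.filter fun v => H'.label v = none) = n := by
      simp only [H', filter_erase, card_erase_of_mem hv, hn, Nat.add_sub_cancel]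
    have hpart : H'.labeledPart = H.labeledPart :=
      PGraph.ext (by simp [PGraph.labeledPart, H', filter_erase, hvl]) rfl rfl
    obtain ⟨hsteps, hred⟩ := ih rfl hn'
    exact ⟨.head hstep (hpart ▸ hsteps), hpart ▸ hred⟩

lemma cutEEdges_all {X : Type} {G : PGraph (Option X)} (hG : G.WF) :
    CutEEdges G (G.edges.image fun e => ⟨e, none⟩) ⟨G.verts, ∅, G.label⟩ := by
  obtain ⟨enc, henc⟩ := Countable.exists_injective_nat (Sym2 ℕ)
  set E : Finset EEdge := G.edges.image fun e => ⟨e, none⟩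
  have hE : ∀ ee ∈ E, ee.e ∈ G.edges ∧ ee.keep = none := fun ee hee => by
    obtain ⟨e, he, rfl⟩ := mem_image.1 hee
    exact ⟨he, rfl⟩
  have hinj : ∀ ee ∈ E, ∀ ee' ∈ E, ee.e = ee'.e → ee = ee' := by
    intro ee hee ee' hee' heq
    obtain ⟨e, -, rfl⟩ := mem_image.1 hee
    obtain ⟨e', -, rfl⟩ := mem_image.1 hee'
    rw [show e = e' from heq]
  have haug : augmented E = ∅ := filter_eq_empty_iff.2 fun ee hee => by simp [(hE ee hee).2]
  -- no endpoint is augmented, but the unused φ-leaves must still be fresh and distinct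
  refine ⟨⟨fun ee hee => ⟨(hE ee hee).1, (hG.1 _ (hE ee hee).1).1, by simp [(hE ee hee).2]⟩,
      fun ee hee k hk => by simp [(hE ee hee).2] at hk, hinj⟩,
    fun ee => G.verts.sup id + 1 + enc ee.e, fun ee hee ee' hee' heq => hinj ee hee ee' hee'
      (henc (by simpa using heq)), fun ee _ hmem => ?_, ?_, ?_, fun _ _ => rfl,
      fun ee hee hk => absurd (hE ee hee).2 hk,
      fun _ => hG.label_eq_none_of_notMem⟩
  · have := le_sup (f := id) hmem
    simp only [id] at this
    omega
  · change G.verts = G.verts ∪ (augmented E).image _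
    simp [haug]
  · change ∅ = (G.edges \ E.image fun ee => ee.e) ∪ (augmented E).image _
    rw [haug, image_empty, union_empty, eq_comm, sdiff_eq_empty_iff_subset]
    exact fun e he => mem_image.2 ⟨⟨e, none⟩, mem_image_of_mem _ he, rfl⟩

lemma endpointForestOf_labeledPart {X : Type} {G : PGraph (Option X)} (hG : G.WF) :
    EndpointForestOf G.labeledPart G :=
  ⟨_, _, _, cutEEdges_all hG, yields_labeledPart rfl, .refl _⟩

variable {X : Type} {T T₁ T₂ : PGraph X}

lemma isPhiForest_labeledPart_toPhi (hT : IsXTree T) : IsPhiForest (toPhi T).labeledPart := by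
  have hdeg : ∀ v, (toPhi T).labeledPart.degree v = 0 := fun v => by
    simp [PGraph.degree, PGraph.labeledPart]
  refine ⟨⟨by simp [PGraph.labeledPart],
      fun v hv => mem_filter.2 ⟨(toPhi_wf hT.1.1).2 v hv, hv⟩⟩,
    by simp [PGraph.Acyclic, PGraph.labeledPart], fun v _ => Or.inl (hdeg v),
    fun v hv => ⟨fun _ => by simp [hdeg], fun _ => (mem_filter.1 hv).2⟩,
    fun v _ h => absurd h (toPhi_label_ne_phi v), fun _ _ _ _ => Set.mem_univ _, fun x _ => ?_⟩
  obtain ⟨v, ⟨hv, hvl⟩, huniq⟩ := hT.2.2.2.2 x (Set.mem_univ x)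
  refine ⟨v, ⟨mem_filter.2 ⟨hv, by simp [toPhi, hvl]⟩,
      by simp [PGraph.labeledPart, toPhi, hvl]⟩,
    fun w ⟨hw, hwl⟩ => huniq w ⟨(mem_filter.1 hw).1, ?_⟩⟩
  simpa [PGraph.labeledPart, toPhi] using hwl

lemma IsXTree.eq_of_label_eq (hT : IsXTree T) {v w : ℕ} (hv : v ∈ T.verts) (hw : w ∈ T.verts)
    {x : X} (hvx : T.label v = some x) (hwx : T.label w = some x) : v = w :=
  (hT.2.2.2.2 x (Set.mem_univ x)).unique ⟨hv, hvx⟩ ⟨hw, hwx⟩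

/-- Both are a single isolated leaf for each label. -/
lemma isom_labeledPart_toPhi (hT₁ : IsXTree T₁) (hT₂ : IsXTree T₂) :
    (toPhi T₁).labeledPart.Isom (toPhi T₂).labeledPart := by
  choose leaf hleaf using fun x => (hT₂.2.2.2.2 x (Set.mem_univ x)).exists
  have hmem : ∀ {T : PGraph X} {v}, v ∈ (toPhi T).labeledPart.verts ↔
      v ∈ T.verts ∧ ∃ x, T.label v = some x := fun {T v} => by
    simp [PGraph.labeledPart, toPhi, Option.isSome_iff_exists]
  obtain ⟨f, hf⟩ : ∃ f : ℕ → ℕ, ∀ {v x}, T₁.label v = some x → f v = leaf x :=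
    ⟨fun v => (T₁.label v).elim 0 leaf, fun h => by simp [h]⟩
  refine ⟨f, ⟨fun v hv => ?_, fun v hv v' hv' heq => ?_,
    fun w hw => ?_⟩, fun _ _ _ _ => by simp [PGraph.labeledPart], fun v hv => ?_⟩
  · obtain ⟨hv, x, hx⟩ := hmem.1 hv
    rw [hf hx]
    exact hmem.2 ⟨(hleaf x).1, x, (hleaf x).2⟩
  · obtain ⟨hv, x, hx⟩ := hmem.1 hv
    obtain ⟨hv', x', hx'⟩ := hmem.1 hv'
    simp only [hf hx, hf hx'] at heq
    have hxx' : x = x' := Option.some_injective _ ((hleaf x).2.symm.trans (heq ▸ (hleaf x').2))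
    exact hT₁.eq_of_label_eq hv hv' hx (hxx' ▸ hx')
  · obtain ⟨hw, x, hx⟩ := hmem.1 hw
    obtain ⟨v, hv, hvx⟩ := (hT₁.2.2.2.2 x (Set.mem_univ x)).exists
    exact ⟨v, hmem.2 ⟨hv, x, hvx⟩, by
      rw [hf hvx]; exact hT₂.eq_of_label_eq (hleaf x).1 hw (hleaf x).2 hx⟩
  · obtain ⟨-, x, hx⟩ := hmem.1 hv
    simp [PGraph.labeledPart, toPhi, hf hx, (hleaf x).2, hx]

end LabeledPart

section EndpointAgreementForest

variable {X : Type} {T₁ T₂ : PGraph X} {F : PGraph (Option X)}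

lemma isEAF_labeledPart (hT₁ : IsXTree T₁) (hT₂ : IsXTree T₂) :
    IsEAF (toPhi T₁).labeledPart T₁ T₂ :=
  ⟨isPhiForest_labeledPart_toPhi hT₁, endpointForestOf_labeledPart (toPhi_wf hT₁.1.1),
    (endpointForestOf_labeledPart (toPhi_wf hT₂.1.1)).of_isom
      (isom_labeledPart_toPhi hT₂ hT₁)⟩

lemma isEAF_toPhi (hT₁ : IsXTree T₁) (hT₂ : IsXTree T₂) (h : T₁.Isom T₂) :
    IsEAF (toPhi T₁) T₁ T₂ :=
  ⟨isPhiForest_toPhi hT₁, endpointForestOf_self (toPhi_wf hT₁.1.1) (reduced_toPhi hT₁),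
    (endpointForestOf_self (toPhi_wf hT₂.1.1) (reduced_toPhi hT₂)).of_isom
      (isom_toPhi_iff.2 h.symm)⟩

lemma IsEAF.weight_nonneg (hT₁ : IsXTree T₁) (h : IsEAF F T₁ T₂) : 0 ≤ weight F := by
  rcases weight_pos_or_isom_of_endpointForestOf hT₁ h.1 h.2.1 with hpos | hiso
  · exact hpos.le
  · rw [← hiso.weight_eq (toPhi_wf hT₁.1.1) h.1.1, weight_toPhi hT₁]

lemma IsEAF.isom_of_weight_eq_zero (hT₁ : IsXTree T₁) (hT₂ : IsXTree T₂)
    (h : IsEAF F T₁ T₂) (hw : weight F = 0) : T₁.Isom T₂ := by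
  have h₁ := (weight_pos_or_isom_of_endpointForestOf hT₁ h.1 h.2.1).resolve_left hw.not_gt
  have h₂ := (weight_pos_or_isom_of_endpointForestOf hT₂ h.1 h.2.2).resolve_left hw.not_gt
  exact isom_toPhi_iff.1 (h₁.trans h₂.symm)

end EndpointAgreementForest

/-- Cutting a nonempty endpoint edge set strictly
increases the weight of an `X`-φ-forest: if `F` is an `X`-φ-forest and
`E` is a nonempty endpoint edge set of `F`, then `ω(F ÷ E) > ω(F)`.
Consequently, `ω(T1,T2) = 0` if and only if `T1 = T2`. -/
theorem cut_strictly_increases_weight {X : Type} :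
    (∀ (F G F' : PGraph (Option X)) (E : Finset EEdge),
        IsPhiForest F → E.Nonempty → CutEEdges F E G → Yields G F' →
        weight F < weight F') ∧
    (∀ T1 T2 : PGraph X, IsXTree T1 → IsXTree T2 →
        (minEAFWeight T1 T2 = 0 ↔ PGraph.Isom T1 T2)) := by
  refine ⟨fun F G F' E hF hE hcut hy => weight_lt_weight_of_cut hF hE hcut hy,
    fun T1 T2 hT1 hT2 => ?_⟩
  set S := {w : ℤ | ∃ F, IsEAF F T1 T2 ∧ weight F = w}
  have hS : ∀ w ∈ S, 0 ≤ w := by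
    rintro w ⟨F, hF, rfl⟩
    exact hF.weight_nonneg hT1
  have hbdd : BddBelow S := ⟨0, hS⟩
  change sInf S = 0 ↔ _
  constructor
  · intro h0
    -- `sInf ∅ = 0` in `ℤ`, so the infimum is attained only because some EAF exists
    have hne : S.Nonempty := ⟨_, _, isEAF_labeledPart hT1 hT2, rfl⟩
    obtain ⟨F, hF, hw⟩ := h0 ▸ Int.csInf_mem hne hbdd
    exact hF.isom_of_weight_eq_zero hT1 hT2 hw
  · intro hiso
    have h0 : (0 : ℤ) ∈ S := ⟨_, isEAF_toPhi hT1 hT2 hiso, weight_toPhi hT1⟩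
    exact le_antisymm (csInf_le hbdd h0) (le_csInf ⟨0, h0⟩ hS)

end USPR
end
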